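/- arXiv:1807.02991 — 10 statements merged into one kernel-verified Lean document; each statement's English description precedes it below -/
import Mathlib

section
/- Let h(y) = ∏_{i=1}^n (y + k_i)^{a_i} with all k_i > 0 and degree a_+ = a_1+...+a_n ≥ 2, and let κ > 0. Then the number of roots of g(y) = h(y) - κ·y in (0, ∞), counted with multiplicity, is either 0 or 2. -/
open Polynomial Set Filter

private lemma coeff_nonneg_mul' {p q : ℝ[X]} (hp : ∀ m, 0 ≤ p.coeff m)
    (hq : ∀ m, 0 ≤ q.coeff m) : ∀ m, 0 ≤ (p * q).coeff m := by
  intro m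
  rw [Polynomial.coeff_mul]
  exact Finset.sum_nonneg fun x _ => mul_nonneg (hp _) (hq _)

private lemma coeff_nonneg_pow' {p : ℝ[X]} (hp : ∀ m, 0 ≤ p.coeff m) (n : ℕ) :
    ∀ m, 0 ≤ (p ^ n).coeff m := by
  induction n with
  | zero =>
    intro m
    rw [pow_zero, Polynomial.coeff_one]
    split <;> norm_num
  | succ n ih =>
    rw [pow_succ]
    exact coeff_nonneg_mul' ih hp

private lemma eval_pos_of_coeff_nonneg' {p : ℝ[X]} (hp : p ≠ 0) (h : ∀ m, 0 ≤ p.coeff m)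
    {y : ℝ} (hy : 0 < y) : 0 < p.eval y := by
  rw [Polynomial.eval_eq_sum_range]
  have h1 : p.coeff p.natDegree * y ^ p.natDegree ≤
      ∑ i ∈ Finset.range (p.natDegree + 1), p.coeff i * y ^ i :=
    Finset.single_le_sum (fun i _ => mul_nonneg (h i) (pow_nonneg hy.le i))
      (Finset.self_mem_range_succ _)
  refine lt_of_lt_of_le ?_ h1
  have hne : p.coeff p.natDegree ≠ 0 := by
    rw [← Polynomial.leadingCoeff]
    exact Polynomial.leadingCoeff_ne_zero.mpr hp
  exact mul_pos (lt_of_le_of_ne (h _) (Ne.symm hne)) (pow_pos hy _)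

private lemma sorted3' {P : ℝ → Prop} {x y z : ℝ} (hx : P x) (hy : P y) (hz : P z)
    (hxy : x ≠ y) (hxz : x ≠ z) (hyz : y ≠ z) :
    ∃ a b c, a < b ∧ b < c ∧ P a ∧ P b ∧ P c := by
  rcases hxy.lt_or_gt with h1 | h1
  · rcases hyz.lt_or_gt with h3 | h3
    · exact ⟨x, y, z, h1, h3, hx, hy, hz⟩
    · rcases hxz.lt_or_gt with h2 | h2
      · exact ⟨x, z, y, h2, h3, hx, hz, hy⟩
      · exact ⟨z, x, y, h2, h1, hz, hx, hy⟩
  · rcases hxz.lt_or_gt with h2 | h2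
    · exact ⟨y, x, z, h1, h2, hy, hx, hz⟩
    · rcases hyz.lt_or_gt with h3 | h3
      · exact ⟨y, z, x, h3, h2, hy, hz, hx⟩
      · exact ⟨z, y, x, h3, h1, hz, hy, hx⟩

theorem stmt3 (n : ℕ) (k : Fin n → ℝ) (hk : ∀ i, 0 < k i) (a : Fin n → ℕ)
    (ha : 2 ≤ ∑ i, a i) (κ : ℝ) (hκ : 0 < κ)
    (g : ℝ[X]) (hg : g = (∏ i, (X + C (k i)) ^ a i) - C κ * X) :
    (g.roots.filter (fun y => 0 < y)).card = 0 ∨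
    (g.roots.filter (fun y => 0 < y)).card = 2 := by
  classical
  set h : ℝ[X] := ∏ i, (X + C (k i)) ^ a i with hh
  have hmon : h.Monic :=
    monic_prod_of_monic _ _ fun i _ => (monic_X_add_C _).pow _
  have hdeg : h.natDegree = ∑ i, a i := by
    rw [hh, natDegree_prod _ _ fun i _ => pow_ne_zero _ (X_add_C_ne_zero _)]
    simp [natDegree_pow, natDegree_X_add_C]
  -- nonnegative coefficients of h and its derivatives
  have hcoeff : ∀ m, 0 ≤ h.coeff m := by
    rw [hh]
    refine Finset.prod_induction _ (fun q : ℝ[X] => ∀ m, 0 ≤ q.coeff m)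
      (fun p' q' hp' hq' => coeff_nonneg_mul' hp' hq') ?_ ?_
    · intro m
      rw [Polynomial.coeff_one]
      split <;> norm_num
    · intro i _
      refine coeff_nonneg_pow' ?_ _
      intro m
      match m with
      | 0 => simpa using (hk i).le
      | 1 => simp
      | (m + 2) => simp [coeff_X, coeff_C]
  have hcoeff1 : ∀ m, 0 ≤ (derivative h).coeff m := fun m => by
    rw [coeff_derivative]
    exact mul_nonneg (hcoeff _) (by positivity)
  have hcoeff2 : ∀ m, 0 ≤ (derivative (derivative h)).coeff m := fun m => by
    rw [coeff_derivative]
    exact mul_nonneg (hcoeff1 _) (by positivity)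
  have hd2 : 2 ≤ h.natDegree := hdeg ▸ ha
  have hhne : h ≠ 0 := hmon.ne_zero
  -- h'' ≠ 0
  have hd1 : (derivative h).natDegree = h.natDegree - 1 :=
    natDegree_eq_of_degree_eq_some (degree_derivative_eq h (by omega))
  have hne2 : derivative (derivative h) ≠ 0 := by
    intro h0
    have e1 : derivative h = C ((derivative h).coeff 0) := eq_C_of_derivative_eq_zero h0
    have e2 : (derivative h).natDegree = 0 := by rw [e1]; exact natDegree_C _
    omega
  have hpos2 : ∀ y : ℝ, 0 < y → 0 < eval y (derivative (derivative h)) := fun y hy =>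
    eval_pos_of_coeff_nonneg' hne2 hcoeff2 hy
  -- derivatives of g
  have hg1 : derivative g = derivative h - C κ := by
    rw [hg]
    simp [derivative_sub]
  have hg2 : derivative (derivative g) = derivative (derivative h) := by
    rw [hg1]
    simp [derivative_sub]
  -- g is monic of the same degree as h
  have hdegh : (1 : WithBot ℕ) < h.degree := by
    rw [degree_eq_natDegree hhne]
    exact_mod_cast by omega
  have hgm : g.Monic := by
    rw [hg, sub_eq_add_neg]
    refine hmon.add_of_left ?_
    calc (-(C κ * X)).degree = (C κ * X).degree := degree_neg _
      _ = (1 : WithBot ℕ) := degree_C_mul_X hκ.ne'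
      _ < h.degree := hdegh
  have hg0 : g ≠ 0 := hgm.ne_zero
  have hdegg : g.degree = h.degree := by
    rw [hg, sub_eq_add_neg]
    refine degree_add_eq_left_of_degree_lt ?_
    calc (-(C κ * X)).degree = (C κ * X).degree := degree_neg _
      _ = (1 : WithBot ℕ) := degree_C_mul_X hκ.ne'
      _ < h.degree := hdegh
  -- g(0) > 0
  have hg0pos : 0 < eval 0 g := by
    rw [hg]
    simp only [eval_sub, eval_mul, eval_C, eval_X, mul_zero, sub_zero, hh, eval_prod,
      eval_pow, eval_add]
    exact Finset.prod_pos fun i _ => pow_pos (by simpa using hk i) _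
  -- g → ∞ at ∞
  have htop : Tendsto (fun x => eval x g) atTop atTop := by
    refine tendsto_atTop_of_leadingCoeff_nonneg g ?_ ?_
    · rw [hdegg]
      exact lt_trans (by norm_num) hdegh
    · rw [hgm.leadingCoeff]
      norm_num
  -- g' is strictly monotone on [0, ∞)
  have hmono : StrictMonoOn (fun x => eval x (derivative g)) (Ici (0 : ℝ)) := by
    refine strictMonoOn_of_deriv_pos (convex_Ici 0)
      ((Polynomial.continuous _).continuousOn) ?_
    intro x hx
    rw [interior_Ici] at hx
    rw [Polynomial.deriv, hg2]
    exact hpos2 x hx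
  have huniq : ∀ u v : ℝ, 0 ≤ u → 0 ≤ v → eval u (derivative g) = 0 →
      eval v (derivative g) = 0 → u = v := fun u v hu hv e1 e2 =>
    hmono.injOn hu hv (e1.trans e2.symm)
  -- Rolle
  have rolle : ∀ u v : ℝ, u < v → eval u g = 0 → eval v g = 0 →
      ∃ c, u < c ∧ c < v ∧ eval c (derivative g) = 0 := by
    intro u v huv e1 e2
    obtain ⟨c, hc, hc'⟩ := exists_deriv_eq_zero huv
      ((Polynomial.continuous g).continuousOn) (e1.trans e2.symm)
    exact ⟨c, hc.1, hc.2, by rwa [Polynomial.deriv] at hc'⟩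
  set S := g.roots.filter (fun y => (0 : ℝ) < y) with hS
  have hmemS : ∀ x, x ∈ S ↔ 0 < x ∧ eval x g = 0 := by
    intro x
    rw [hS, Multiset.mem_filter, mem_roots hg0]
    exact ⟨fun ⟨a, b⟩ => ⟨b, a⟩, fun ⟨a, b⟩ => ⟨b, a⟩⟩
  have hcount : ∀ x ∈ S, S.count x = g.rootMultiplicity x := by
    intro x hx
    have hx0 : (0 : ℝ) < x := ((hmemS x).mp hx).1
    rw [hS, Multiset.count_filter, if_pos hx0, count_roots]
  -- card ≤ 2
  have hcard2 : S.card ≤ 2 := by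
    by_contra hc
    push_neg at hc
    by_cases hbig : ∃ x ∈ S, 2 ≤ S.count x
    · obtain ⟨x, hxS, hcx⟩ := hbig
      obtain ⟨hx0, hxr⟩ := (hmemS x).mp hxS
      have hmx : 2 ≤ g.rootMultiplicity x := by rw [← hcount x hxS]; exact hcx
      have hdx : eval x (derivative g) = 0 := by
        have := isRoot_iterate_derivative_of_lt_rootMultiplicity (p := g) (t := x) (n := 1)
          (by omega)
        simpa [IsRoot] using this
      by_cases hall : ∀ b ∈ S, x = b
      · have : S.count x = S.card := Multiset.count_eq_card.mpr hall
        have hmx3 : 3 ≤ g.rootMultiplicity x := by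
          rw [← hcount x hxS]; omega
        have := isRoot_iterate_derivative_of_lt_rootMultiplicity (p := g) (t := x) (n := 2)
          (by omega)
        have h2x : eval x (derivative (derivative g)) = 0 := by
          simpa [IsRoot, Function.iterate_succ, Function.comp] using this
        rw [hg2] at h2x
        exact absurd h2x (ne_of_gt (hpos2 x hx0))
      · push_neg at hall
        obtain ⟨y, hyS, hyx⟩ := hall
        obtain ⟨hy0, hyr⟩ := (hmemS y).mp hyS
        rcases hyx.lt_or_gt with hlt | hlt
        · obtain ⟨c, hc1, hc2, hc3⟩ := rolle x y hlt hxr hyr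
          have := huniq x c hx0.le (by linarith) hdx hc3
          linarith
        · obtain ⟨c, hc1, hc2, hc3⟩ := rolle y x hlt hyr hxr
          have := huniq x c hx0.le (by linarith) hdx hc3
          linarith
    · push_neg at hbig
      have hnodup : S.Nodup := Multiset.nodup_iff_count_le_one.mpr fun x => by
        by_cases hx : x ∈ S
        · have := hbig x hx; omega
        · rw [Multiset.count_eq_zero_of_notMem hx]; omega
      have hcardF : 3 ≤ S.toFinset.card := by
        rw [Multiset.toFinset_card_eq_card_iff_nodup.mpr hnodup]
        omega
      obtain ⟨x, hx⟩ := Finset.card_pos.mp (by omega : 0 < S.toFinset.card)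
      obtain ⟨y, hy, hyx⟩ := Finset.exists_mem_ne (s := S.toFinset) (by omega) x
      have herase : 1 < (S.toFinset.erase x).card := by
        rw [Finset.card_erase_of_mem hx]
        omega
      obtain ⟨z, hz, hzy⟩ := Finset.exists_mem_ne herase y
      obtain ⟨hzx, hzF⟩ := Finset.mem_erase.mp hz
      have hxS : x ∈ S := Multiset.mem_toFinset.mp hx
      have hyS : y ∈ S := Multiset.mem_toFinset.mp hy
      have hzS : z ∈ S := Multiset.mem_toFinset.mp hzF
      obtain ⟨p, q, r, hpq, hqr, hpS, hqS, hrS⟩ :=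
        sorted3' (P := fun t => t ∈ S) hxS hyS hzS (Ne.symm hyx) (Ne.symm hzx) (Ne.symm hzy)
      obtain ⟨hp0, hpr⟩ := (hmemS p).mp hpS
      obtain ⟨hq0, hqr'⟩ := (hmemS q).mp hqS
      obtain ⟨hr0, hrr⟩ := (hmemS r).mp hrS
      obtain ⟨c1, hc11, hc12, hc13⟩ := rolle p q hpq hpr hqr'
      obtain ⟨c2, hc21, hc22, hc23⟩ := rolle q r hqr hqr' hrr
      have := huniq c1 c2 (by linarith) (by linarith) hc13 hc23
      linarith
  -- card ≠ 1
  have hcard1 : S.card ≠ 1 := by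
    intro h1
    obtain ⟨r, hr⟩ := Multiset.card_eq_one.mp h1
    have hrS : r ∈ S := by rw [hr]; exact Multiset.mem_singleton_self r
    obtain ⟨hr0, hrr⟩ := (hmemS r).mp hrS
    have hmult : g.rootMultiplicity r = 1 := by
      rw [← hcount r hrS, hr, Multiset.count_singleton_self]
    have hgr' : eval r (derivative g) ≠ 0 := by
      intro h0
      have h2lt : 1 < g.rootMultiplicity r :=
        (one_lt_rootMultiplicity_iff_isRoot hg0).mpr ⟨hrr, h0⟩
      omega
    rcases hgr'.lt_or_gt with hneg | hpos
    · -- g'(r) < 0 : g decreases just right of r, then use g → ∞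
      have hopen : IsOpen {x : ℝ | eval x (derivative g) < 0} :=
        isOpen_lt (Polynomial.continuous _) continuous_const
      obtain ⟨ε, hε, hball⟩ := Metric.isOpen_iff.mp hopen r hneg
      set x₁ := r + ε / 2 with hx₁
      have hrx₁ : r < x₁ := by rw [hx₁]; linarith
      have hsub : Icc r x₁ ⊆ Metric.ball r ε := by
        intro t ht
        have h1 := ht.1
        have h2 := ht.2
        rw [hx₁] at h2
        rw [Metric.mem_ball, Real.dist_eq, abs_sub_lt_iff]
        constructor <;> linarith
      have hanti : StrictAntiOn (fun x => eval x g) (Icc r x₁) := by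
        refine strictAntiOn_of_deriv_neg (convex_Icc _ _)
          ((Polynomial.continuous g).continuousOn) ?_
        intro t ht
        rw [interior_Icc] at ht
        rw [Polynomial.deriv]
        exact hball (hsub ⟨ht.1.le, ht.2.le⟩)
      have hgx₁ : eval x₁ g < 0 := by
        have h' : eval x₁ g < eval r g :=
          hanti (left_mem_Icc.mpr hrx₁.le) (right_mem_Icc.mpr hrx₁.le) hrx₁
        rwa [hrr] at h'
      obtain ⟨M, hM1, hM2⟩ := ((htop.eventually_gt_atTop 0).and (eventually_gt_atTop x₁)).exists
      have hIVT := intermediate_value_Ioo hM2.le ((Polynomial.continuous g).continuousOn)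
      obtain ⟨z, hz, hz0⟩ := hIVT (show (0 : ℝ) ∈ Ioo (eval x₁ g) (eval M g) from ⟨hgx₁, hM1⟩)
      have hzS : z ∈ S := (hmemS z).mpr ⟨by linarith [hz.1], hz0⟩
      rw [hr, Multiset.mem_singleton] at hzS
      have := hz.1
      rw [hzS] at this
      linarith
    · -- g'(r) > 0 : g increases just left of r, use g(0) > 0
      have hopen : IsOpen {x : ℝ | 0 < eval x (derivative g)} :=
        isOpen_lt continuous_const (Polynomial.continuous _)
      obtain ⟨ε, hε, hball⟩ := Metric.isOpen_iff.mp hopen r hpos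
      set x₀ := max (r - ε / 2) (r / 2) with hx₀
      have hx₀r : x₀ < r := by
        rw [hx₀]
        exact max_lt (by linarith) (by linarith)
      have hx₀0 : 0 < x₀ := lt_of_lt_of_le (by linarith) (le_max_right _ _)
      have hsub : Icc x₀ r ⊆ Metric.ball r ε := by
        intro t ht
        have h1 := ht.1; have h2 := ht.2
        have h3 : r - ε / 2 ≤ x₀ := le_max_left _ _
        rw [Metric.mem_ball, Real.dist_eq, abs_sub_lt_iff]
        constructor <;> linarith
      have hmono2 : StrictMonoOn (fun x => eval x g) (Icc x₀ r) := by
        refine strictMonoOn_of_deriv_pos (convex_Icc _ _)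
          ((Polynomial.continuous g).continuousOn) ?_
        intro t ht
        rw [interior_Icc] at ht
        rw [Polynomial.deriv]
        exact hball (hsub ⟨ht.1.le, ht.2.le⟩)
      have hgx₀ : eval x₀ g < 0 := by
        have h' : eval x₀ g < eval r g :=
          hmono2 (left_mem_Icc.mpr hx₀r.le) (right_mem_Icc.mpr hx₀r.le) hx₀r
        rwa [hrr] at h'
      have hIVT := intermediate_value_Ioo' hx₀0.le ((Polynomial.continuous g).continuousOn)
      obtain ⟨z, hz, hz0⟩ := hIVT (show (0 : ℝ) ∈ Ioo (eval x₀ g) (eval 0 g) from ⟨hgx₀, hg0pos⟩)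
      have hzS : z ∈ S := (hmemS z).mpr ⟨hz.1, hz0⟩
      rw [hr, Multiset.mem_singleton] at hzS
      have := hz.2
      rw [hzS] at this
      linarith
  have hfin : S.card = 0 ∨ S.card = 2 := by omega
  exact hfin
end

section
/- Let h(y) = ∏_{i=1}^n (y + k_i)^{a_i} with all k_i > 0 and degree a_+ ≥ 2. Then there exists y_0 > 0 such that h(y_0) = h'(y_0)·y_0, and for every κ > h'(y_0) the equation h(y) = κ·y has exactly two solutions in (0, ∞), both transversal (i.e., h'(y) ≠ κ at each solution). -/
/-!
Write `u(y) = y h'(y) / h(y) = ∑ aᵢ y / (y + kᵢ)` for the elasticity of `h`. It increases strictly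
from `u(0) = 0` to the limit `a₊ ≥ 2`, so it crosses `1` at a unique `y₀ > 0`, where the tangent
to `h` passes through the origin. Since `(h(y) / y)' = h(y) (u(y) - 1) / y²`, the slope `h(y) / y`
decreases strictly on `(0, y₀]` from `+∞` and increases strictly on `[y₀, ∞)` to `+∞`, so it takes
each value `κ > h(y₀) / y₀ = h'(y₀)` exactly once on either side. At such a solution `y ≠ y₀`,
hence `h'(y) y ≠ h(y) = κ y`.
-/

open Polynomial Set Filter Topology

section SlopeFromOrigin

variable {f f' : ℝ → ℝ} {y₀ κ : ℝ}

theorem strictAntiOn_div_id_of_deriv_mul_lt (hf : ∀ y, HasDerivAt f (f' y) y)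
    (hlt : ∀ y ∈ Ioo 0 y₀, f' y * y < f y) : StrictAntiOn (fun y => f y / y) (Ioc 0 y₀) := by
  refine strictAntiOn_of_hasDerivWithinAt_neg (f' := fun y => (f' y * y - f y * 1) / y ^ 2)
    (convex_Ioc 0 y₀)
    (fun y hy => ((hf y).continuousAt.div continuousAt_id hy.1.ne').continuousWithinAt)
    (fun y hy => ?_) fun y hy => ?_
  · rw [interior_Ioc] at hy
    exact ((hf y).div (hasDerivAt_id y) hy.1.ne').hasDerivWithinAt
  · rw [interior_Ioc] at hy
    exact div_neg_of_neg_of_pos (by simpa using hlt y hy) (pow_pos hy.1 2)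

theorem strictMonoOn_div_id_of_lt_deriv_mul (hf : ∀ y, HasDerivAt f (f' y) y) (hy₀ : 0 < y₀)
    (hgt : ∀ y ∈ Ioi y₀, f y < f' y * y) : StrictMonoOn (fun y => f y / y) (Ici y₀) := by
  have hpos : ∀ y, y₀ ≤ y → 0 < y := fun y hy => hy₀.trans_le hy
  refine strictMonoOn_of_hasDerivWithinAt_pos (f' := fun y => (f' y * y - f y * 1) / y ^ 2)
    (convex_Ici y₀)
    (fun y hy => ((hf y).continuousAt.div continuousAt_id (hpos y hy).ne').continuousWithinAt)
    (fun y hy => ?_) fun y hy => ?_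
  · rw [interior_Ici] at hy
    exact ((hf y).div (hasDerivAt_id y) (hpos y (le_of_lt hy)).ne').hasDerivWithinAt
  · rw [interior_Ici] at hy
    exact div_pos (by simpa using hgt y hy) (pow_pos (hpos y (le_of_lt hy)) 2)

theorem exists_two_transversal_solutions (hf : ∀ y, HasDerivAt f (f' y) y) (hf₀ : 0 < f 0)
    (hy₀ : 0 < y₀) (htangent : f' y₀ * y₀ = f y₀) (hlt : ∀ y ∈ Ioo 0 y₀, f' y * y < f y)
    (hgt : ∀ y ∈ Ioi y₀, f y < f' y * y) (htop : Tendsto (fun y => f y / y) atTop atTop)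
    (hκ : f' y₀ < κ) :
    ∃ y₁ y₂ : ℝ, 0 < y₁ ∧ 0 < y₂ ∧ y₁ ≠ y₂ ∧ f y₁ = κ * y₁ ∧ f y₂ = κ * y₂ ∧
      f' y₁ ≠ κ ∧ f' y₂ ≠ κ ∧ ∀ z : ℝ, 0 < z → f z = κ * z → z = y₁ ∨ z = y₂ := by
  have hcont : Continuous fun y => f y - κ * y :=
    (continuous_iff_continuousAt.2 fun y => (hf y).continuousAt).sub (continuous_const_mul κ)
  have hbelow : f y₀ - κ * y₀ < 0 := by nlinarith
  obtain ⟨y₁, ⟨hy₁, hy₁₀⟩, hsol₁⟩ : ∃ y₁ ∈ Ioo 0 y₀, f y₁ - κ * y₁ = 0 :=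
    intermediate_value_Ioo' hy₀.le hcont.continuousOn ⟨hbelow, by simpa using hf₀⟩
  obtain ⟨Y, hY, hYκ⟩ : ∃ Y, y₀ < Y ∧ κ < f Y / Y :=
    ((eventually_gt_atTop y₀).and (htop.eventually_gt_atTop κ)).exists
  obtain ⟨y₂, ⟨hy₂₀, -⟩, hsol₂⟩ : ∃ y₂ ∈ Ioo y₀ Y, f y₂ - κ * y₂ = 0 :=
    intermediate_value_Ioo hY.le hcont.continuousOn
      ⟨hbelow, by rw [lt_div_iff₀ (hy₀.trans hY)] at hYκ; linarith⟩
  have hy₂ : 0 < y₂ := hy₀.trans hy₂₀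
  rw [sub_eq_zero] at hsol₁ hsol₂
  have hslope : ∀ {y}, 0 < y → f y = κ * y → f y / y = κ := fun hy h => (div_eq_iff hy.ne').2 h
  refine ⟨y₁, y₂, hy₁, hy₂, (hy₁₀.trans hy₂₀).ne, hsol₁, hsol₂, ?_, ?_, fun z hz hsol => ?_⟩
  · exact fun hκ₁ => (hlt y₁ ⟨hy₁, hy₁₀⟩).ne (by rw [hκ₁, hsol₁])
  · exact fun hκ₂ => (hgt y₂ hy₂₀).ne' (by rw [hκ₂, hsol₂])
  rcases le_or_gt z y₀ with hz₀ | hz₀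
  · exact .inl <| (strictAntiOn_div_id_of_deriv_mul_lt hf hlt).injOn ⟨hz, hz₀⟩ ⟨hy₁, hy₁₀.le⟩
      ((hslope hz hsol).trans (hslope hy₁ hsol₁).symm)
  · exact .inr <| (strictMonoOn_div_id_of_lt_deriv_mul hf hy₀ hgt).injOn hz₀.le hy₂₀.le
      ((hslope hz hsol).trans (hslope hy₂ hsol₂).symm)

end SlopeFromOrigin

theorem strictMonoOn_div_add_const {c : ℝ} (hc : 0 < c) :
    StrictMonoOn (fun y => y / (y + c)) (Ioi (-c)) := by
  intro x hx y hy hxy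
  rw [mem_Ioi] at hx hy
  rw [div_lt_div_iff₀ (by linarith) (by linarith)]
  nlinarith

theorem tendsto_div_add_const_atTop (c : ℝ) :
    Tendsto (fun y : ℝ => y / (y + c)) atTop (𝓝 1) := by
  have hshift : Tendsto (fun y : ℝ => y + c) atTop atTop :=
    tendsto_atTop_add_const_right _ c tendsto_id
  have hlim : Tendsto (fun y => 1 - c / (y + c)) atTop (𝓝 (1 - 0)) :=
    tendsto_const_nhds.sub (tendsto_const_nhds.div_atTop hshift)
  rw [sub_zero] at hlim
  refine hlim.congr' ((hshift.eventually_gt_atTop 0).mono fun y hy => ?_)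
  field_simp
  ring

section Elasticity

variable {ι : Type*} [Fintype ι] {k : ι → ℝ} {a : ι → ℕ} {y y₀ : ℝ}

/-- The elasticity `y h'(y) / h(y)` of `h = ∏ i, (X + C (k i)) ^ a i`. -/
noncomputable def elasticity (k : ι → ℝ) (a : ι → ℕ) (y : ℝ) : ℝ := ∑ i, a i * (y / (y + k i))

theorem elasticity_zero : elasticity k a 0 = 0 := by simp [elasticity]

theorem continuousOn_elasticity (hk : ∀ i, 0 < k i) : ContinuousOn (elasticity k a) (Ici 0) :=
  continuousOn_finsetSum _ fun i _ => continuousOn_const.mul <|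
    continuousOn_id.div (by fun_prop) fun y hy => (add_pos_of_nonneg_of_pos hy (hk i)).ne'

theorem strictMonoOn_elasticity (hk : ∀ i, 0 < k i) (ha : ∑ i, a i ≠ 0) :
    StrictMonoOn (elasticity k a) (Ici 0) := by
  obtain ⟨i₀, -, hi₀⟩ := Finset.exists_ne_zero_of_sum_ne_zero ha
  intro x hx y hy hxy
  have hfrac : ∀ i, x / (x + k i) < y / (y + k i) := fun i =>
    strictMonoOn_div_add_const (hk i) ((neg_neg_of_pos (hk i)).trans_le hx)
      ((neg_neg_of_pos (hk i)).trans_le hy) hxy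
  exact Finset.sum_lt_sum (fun i _ => mul_le_mul_of_nonneg_left (hfrac i).le (Nat.cast_nonneg _))
    ⟨i₀, Finset.mem_univ _, mul_lt_mul_of_pos_left (hfrac i₀) (by positivity)⟩

theorem tendsto_elasticity_atTop : Tendsto (elasticity k a) atTop (𝓝 (∑ i, (a i : ℝ))) :=
  tendsto_finsetSum _ fun i _ => by
    simpa using (tendsto_div_add_const_atTop (k i)).const_mul (a i : ℝ)

theorem exists_elasticity_eq_one (hk : ∀ i, 0 < k i) (ha : 1 < ∑ i, a i) :
    ∃ y₀, 0 < y₀ ∧ elasticity k a y₀ = 1 := by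
  have ha' : (1 : ℝ) < ∑ i, (a i : ℝ) := by exact_mod_cast ha
  obtain ⟨Y, hY, hY₁⟩ := ((eventually_gt_atTop 0).and
    (tendsto_elasticity_atTop.eventually_const_lt ha')).exists
  obtain ⟨y₀, ⟨hy₀, -⟩, he⟩ := intermediate_value_Ioo hY.le
    ((continuousOn_elasticity hk).mono Icc_subset_Ici_self)
    (⟨by rw [elasticity_zero]; exact one_pos, hY₁⟩ : (1 : ℝ) ∈ Ioo _ _)
  exact ⟨y₀, hy₀, he⟩

theorem eval_prod_X_add_C_pow (y : ℝ) :
    (∏ i, (X + C (k i)) ^ a i).eval y = ∏ i, (y + k i) ^ a i := by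
  simp [eval_prod]

theorem eval_prod_X_add_C_pow_pos (hk : ∀ i, 0 < k i) (hy : 0 ≤ y) :
    0 < (∏ i, (X + C (k i)) ^ a i).eval y := by
  rw [eval_prod_X_add_C_pow]
  exact Finset.prod_pos fun i _ => pow_pos (add_pos_of_nonneg_of_pos hy (hk i)) _

theorem eval_derivative_prod_X_add_C_pow (hy : ∀ i, y + k i ≠ 0) :
    (derivative (∏ i, (X + C (k i)) ^ a i)).eval y =
      (∏ i, (X + C (k i)) ^ a i).eval y * ∑ i, a i / (y + k i) := by
  have hne : ∏ i, (y + k i) ^ a i ≠ 0 := Finset.prod_ne_zero_iff.2 fun i _ => pow_ne_zero _ (hy i)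
  have hlog : logDeriv (fun y => ∏ i, (y + k i) ^ a i) y = ∑ i, a i / (y + k i) := by
    rw [logDeriv_prod (f := fun i y => (y + k i) ^ a i) (fun i _ => pow_ne_zero _ (hy i))
      fun i _ => by fun_prop]
    refine Finset.sum_congr rfl fun i _ => ?_
    rw [logDeriv_fun_pow (by fun_prop), logDeriv_apply]
    simp [div_eq_mul_inv]
  rw [logDeriv_apply, div_eq_iff hne] at hlog
  rw [← Polynomial.deriv, _root_.funext eval_prod_X_add_C_pow, hlog, eval_prod_X_add_C_pow,
    mul_comm]

theorem eval_derivative_mul_eq_mul_elasticity (hk : ∀ i, 0 < k i) (hy : 0 ≤ y) :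
    (derivative (∏ i, (X + C (k i)) ^ a i)).eval y * y =
      (∏ i, (X + C (k i)) ^ a i).eval y * elasticity k a y := by
  rw [eval_derivative_prod_X_add_C_pow fun i => (add_pos_of_nonneg_of_pos hy (hk i)).ne',
    mul_assoc, elasticity, Finset.sum_mul]
  congr 1
  exact Finset.sum_congr rfl fun i _ => by ring

theorem eval_derivative_mul_lt_eval (hk : ∀ i, 0 < k i) (ha : ∑ i, a i ≠ 0) (hy : 0 ≤ y)
    (hy₀ : y < y₀) (he : elasticity k a y₀ = 1) :
    (derivative (∏ i, (X + C (k i)) ^ a i)).eval y * y < (∏ i, (X + C (k i)) ^ a i).eval y := by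
  rw [eval_derivative_mul_eq_mul_elasticity hk hy]
  refine mul_lt_of_lt_one_right (eval_prod_X_add_C_pow_pos hk hy) ?_
  exact he ▸ strictMonoOn_elasticity hk ha hy (hy.trans hy₀.le) hy₀

theorem eval_lt_eval_derivative_mul (hk : ∀ i, 0 < k i) (ha : ∑ i, a i ≠ 0) (hy₀ : 0 ≤ y₀)
    (hy : y₀ < y) (he : elasticity k a y₀ = 1) :
    (∏ i, (X + C (k i)) ^ a i).eval y < (derivative (∏ i, (X + C (k i)) ^ a i)).eval y * y := by
  have hy' : 0 ≤ y := hy₀.trans hy.le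
  rw [eval_derivative_mul_eq_mul_elasticity hk hy']
  refine lt_mul_of_one_lt_right (eval_prod_X_add_C_pow_pos hk hy') ?_
  exact he ▸ strictMonoOn_elasticity hk ha hy₀ hy' hy

theorem natDegree_prod_X_add_C_pow : (∏ i, (X + C (k i)) ^ a i).natDegree = ∑ i, a i := by
  rw [natDegree_prod_of_monic _ _ fun i _ => (monic_X_add_C _).pow _]
  simp only [natDegree_pow_X_add_C]

theorem tendsto_eval_prod_X_add_C_pow_div_atTop (ha : 1 < ∑ i, a i) :
    Tendsto (fun y => (∏ i, (X + C (k i)) ^ a i).eval y / y) atTop atTop := by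
  have hmonic : (∏ i, (X + C (k i)) ^ a i).Monic :=
    monic_prod_of_monic _ _ fun i _ => (monic_X_add_C _).pow _
  have hdeg : (X : ℝ[X]).degree < (∏ i, (X + C (k i)) ^ a i).degree := by
    rw [degree_X, degree_eq_natDegree hmonic.ne_zero, natDegree_prod_X_add_C_pow]
    exact_mod_cast ha
  simpa using div_tendsto_atTop_of_degree_gt' _ _ hdeg (by simp [hmonic.leadingCoeff])

end Elasticity

theorem stmt4 (n : ℕ) (k : Fin n → ℝ) (hk : ∀ i, 0 < k i) (a : Fin n → ℕ)
    (ha : 2 ≤ ∑ i, a i)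
    (h : ℝ[X]) (hh : h = ∏ i, (X + C (k i)) ^ a i) :
    ∃ y0 : ℝ, 0 < y0 ∧ h.eval y0 = (derivative h).eval y0 * y0 ∧
      ∀ κ : ℝ, (derivative h).eval y0 < κ →
        ∃ y1 y2 : ℝ, 0 < y1 ∧ 0 < y2 ∧ y1 ≠ y2 ∧
          h.eval y1 = κ * y1 ∧ h.eval y2 = κ * y2 ∧
          (derivative h).eval y1 ≠ κ ∧ (derivative h).eval y2 ≠ κ ∧
          ∀ z : ℝ, 0 < z → h.eval z = κ * z → z = y1 ∨ z = y2 := by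
  subst hh
  have ha₁ : 1 < ∑ i, a i := by omega
  have ha₀ : ∑ i, a i ≠ 0 := by omega
  obtain ⟨y₀, hy₀, he₀⟩ := exists_elasticity_eq_one hk ha₁
  have htangent := eval_derivative_mul_eq_mul_elasticity (a := a) hk hy₀.le
  rw [he₀, mul_one] at htangent
  refine ⟨y₀, hy₀, htangent.symm, fun κ hκ => ?_⟩
  exact exists_two_transversal_solutions (fun y => Polynomial.hasDerivAt _ y)
    (eval_prod_X_add_C_pow_pos hk le_rfl) hy₀ htangent
    (fun y hy => eval_derivative_mul_lt_eval hk ha₀ hy.1.le hy.2 he₀)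
    (fun y hy => eval_lt_eval_derivative_mul hk ha₀ hy₀.le hy he₀)
    (tendsto_eval_prod_X_add_C_pow_div_atTop ha₁) hκ
end

section
/- Let h(y) = ∏_{i=1}^n (ε_i·y + k_i)^{a_i} where each ε_i ∈ {+1, -1}, each k_i > 0, each a_i ≥ 1, and at least one ε_i = +1 and at least one ε_i = -1. Let k_- = min{k_i : ε_i = -1}. Then h' has exactly one root ξ in the interval (-min{k_i : ε_i = +1}, k_-), this root is simple, ξ is a local maximum of h, and h is strictly decreasing on (ξ, k_-). Moreover ξ ∈ (0, k_-) if and only if γ := Σ_{i=1}^n ε_i·a_i/k_i > 0. -/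
/-!
On the root-free interval `I = (-k₊, k₋)` every factor `ε i * y + k i` is positive, so `h > 0`
there and `h' = h * G` with `G y = ∑ ε i a i / (ε i y + k i)`. Each term of `G` is strictly
decreasing (its derivative is `-a i / (ε i y + k i)²`), and `G` tends to `+∞` at `-k₊` and to
`-∞` at `k₋`, the pole of a single term dominating the bounded rest. Hence `G`, and with it `h'`,
has exactly one zero `ξ` on `I`; `h` increases before `ξ` and decreases after it,
`h''(ξ) = h(ξ) G'(ξ) ≠ 0`, and `ξ > 0` iff `G 0 = γ > 0`.
-/

open Polynomial Filter Topology Set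

theorem hasDerivAt_finset_prod_of_hasDerivAt_mul {𝕜 ι : Type*} [NontriviallyNormedField 𝕜]
    {s : Finset ι} {f : ι → 𝕜 → 𝕜} {c : ι → 𝕜} {x : 𝕜}
    (hf : ∀ i ∈ s, HasDerivAt (f i) (f i x * c i) x) :
    HasDerivAt (fun y => ∏ i ∈ s, f i y) ((∏ i ∈ s, f i x) * ∑ i ∈ s, c i) x := by
  classical
  induction s using Finset.induction_on with
  | empty => simpa using hasDerivAt_const x (1 : 𝕜)
  | insert j s hj ih =>
    simp only [Finset.prod_insert hj, Finset.sum_insert hj]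
    refine ((hf j (s.mem_insert_self j)).mul
      (ih fun i hi => hf i (Finset.mem_insert_of_mem hi))).congr_deriv ?_
    ring

theorem hasDerivAt_linear_pow {ε k y : ℝ} (a : ℕ) (hy : ε * y + k ≠ 0) :
    HasDerivAt (fun t => (ε * t + k) ^ a) ((ε * y + k) ^ a * (ε * a / (ε * y + k))) y := by
  have hlin : HasDerivAt (fun t => ε * t + k) ε y := by
    simpa using ((hasDerivAt_id y).const_mul ε).add_const k
  refine (hlin.fun_pow a).congr_deriv ?_
  rcases a with _ | a
  · simp
  · rw [Nat.add_sub_cancel, pow_succ]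
    field_simp

theorem linear_pos_of_mem_Ioo {ι : Type*} {ε k : ι → ℝ} (hε : ∀ i, ε i = 1 ∨ ε i = -1)
    {kp km y : ℝ} (hkp : ∀ i, ε i = 1 → kp ≤ k i) (hkm : ∀ i, ε i = -1 → km ≤ k i)
    (hy : y ∈ Ioo (-kp) km) (i : ι) : 0 < ε i * y + k i := by
  rcases hε i with hi | hi
  · linarith [hkp i hi, hy.1, show ε i * y = y by simp [hi]]
  · linarith [hkm i hi, hy.2, show ε i * y = -y by simp [hi]]

theorem neg_div_le_div_linear {e κ y : ℝ} (c : ℝ) (hc : 0 ≤ c) (he : e = 1 ∨ e = -1)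
    (hκ : 0 < κ) (hy : y ≤ 0) (hpos : 0 < e * y + κ) : -(c / κ) ≤ e * c / (e * y + κ) := by
  rcases he with rfl | rfl
  · have : 0 ≤ c / κ := by positivity
    have : 0 ≤ 1 * c / (1 * y + κ) := by positivity
    linarith
  · rw [neg_one_mul, neg_one_mul, neg_div, neg_le_neg_iff]
    exact div_le_div_of_nonneg_left hc hκ (by linarith)

section FactorLogDeriv

variable {ι : Type*} [Fintype ι] (ε k : ι → ℝ) (a : ι → ℕ)

noncomputable def factorLogDeriv (y : ℝ) : ℝ := ∑ i, ε i * a i / (ε i * y + k i)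

variable {ε k a}

theorem hasDerivAt_prod_linear_pow {y : ℝ} (hy : ∀ i, ε i * y + k i ≠ 0) :
    HasDerivAt (fun t => ∏ i, (ε i * t + k i) ^ a i)
      ((∏ i, (ε i * y + k i) ^ a i) * factorLogDeriv ε k a y) y :=
  hasDerivAt_finset_prod_of_hasDerivAt_mul fun i _ => hasDerivAt_linear_pow (a i) (hy i)

theorem hasDerivAt_factorLogDeriv {y : ℝ} (hy : ∀ i, ε i * y + k i ≠ 0) :
    HasDerivAt (factorLogDeriv ε k a) (-∑ i, ε i ^ 2 * a i / (ε i * y + k i) ^ 2) y := by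
  rw [← Finset.sum_neg_distrib]
  refine HasDerivAt.fun_sum fun i _ => ?_
  have hlin : HasDerivAt (fun t => ε i * t + k i) (ε i) y := by
    simpa using ((hasDerivAt_id y).const_mul (ε i)).add_const (k i)
  refine ((hasDerivAt_const y (ε i * a i)).div hlin (hy i)).congr_deriv ?_
  ring

theorem deriv_factorLogDeriv_neg {y : ℝ} (hy : ∀ i, ε i * y + k i ≠ 0) {i₀ : ι} (hε₀ : ε i₀ ≠ 0)
    (ha₀ : a i₀ ≠ 0) : deriv (factorLogDeriv ε k a) y < 0 := by
  rw [(hasDerivAt_factorLogDeriv hy).deriv]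
  refine neg_neg_of_pos (Finset.sum_pos' (fun i _ => by positivity) ⟨i₀, by simp, ?_⟩)
  have := hy i₀
  positivity

theorem strictAntiOn_factorLogDeriv {s : Set ℝ} (hs : Convex ℝ s)
    (hy : ∀ y ∈ s, ∀ i, ε i * y + k i ≠ 0) {i₀ : ι} (hε₀ : ε i₀ ≠ 0) (ha₀ : a i₀ ≠ 0) :
    StrictAntiOn (factorLogDeriv ε k a) s :=
  strictAntiOn_of_deriv_neg hs
    (fun y hys => (hasDerivAt_factorLogDeriv (hy y hys)).continuousAt.continuousWithinAt)
    fun y hys => deriv_factorLogDeriv_neg (hy y (interior_subset hys)) hε₀ ha₀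

theorem factorLogDeriv_neg (y : ℝ) : factorLogDeriv (-ε) k a (-y) = -factorLogDeriv ε k a y := by
  simp [factorLogDeriv, neg_div, Finset.sum_neg_distrib]

theorem tendsto_factorLogDeriv_nhdsGT (hε : ∀ i, ε i = 1 ∨ ε i = -1) (hk : ∀ i, 0 < k i)
    {i₀ : ι} (hε₀ : ε i₀ = 1) (ha₀ : a i₀ ≠ 0) (hmin : ∀ i, ε i = 1 → k i₀ ≤ k i) :
    Tendsto (factorLogDeriv ε k a) (𝓝[>] (-k i₀)) atTop := by
  classical
  set S := ∑ i, (a i : ℝ) / k i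
  have hshift : Tendsto (fun y => y + k i₀) (𝓝[>] (-k i₀)) (𝓝[>] 0) := by
    refine tendsto_nhdsWithin_iff.2 ⟨?_, ?_⟩
    · exact ((continuous_id.add continuous_const).tendsto' _ _ (by simp)).mono_left
        nhdsWithin_le_nhds
    · filter_upwards [self_mem_nhdsWithin] with y (hy : -k i₀ < y)
      exact neg_lt_iff_pos_add.1 hy
  have hpole : Tendsto (fun y => a i₀ * (y + k i₀)⁻¹ - S) (𝓝[>] (-k i₀)) atTop :=
    tendsto_atTop_add_const_right _ _
      ((tendsto_inv_nhdsGT_zero.comp hshift).const_mul_atTop (by positivity))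
  refine tendsto_atTop_mono' _ ?_ hpole
  filter_upwards [Ioo_mem_nhdsGT (neg_lt_zero.2 (hk i₀))] with y hy
  have hpos := linear_pos_of_mem_Ioo hε hmin (fun i _ => (hk i).le) hy
  calc a i₀ * (y + k i₀)⁻¹ - S
      = ∑ i, ((if i = i₀ then ε i * a i / (ε i * y + k i) else 0) - a i / k i) := by
        simp [S, Finset.sum_sub_distrib, hε₀, div_eq_mul_inv]
    _ ≤ factorLogDeriv ε k a y := Finset.sum_le_sum fun i _ => ?_
  split_ifs with hi
  · have : 0 ≤ (a i : ℝ) / k i := by positivity [hk i]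
    linarith
  · simpa using neg_div_le_div_linear (a i : ℝ) (by positivity) (hε i) (hk i) hy.2.le (hpos i)

theorem tendsto_factorLogDeriv_nhdsLT (hε : ∀ i, ε i = 1 ∨ ε i = -1) (hk : ∀ i, 0 < k i)
    {i₀ : ι} (hε₀ : ε i₀ = -1) (ha₀ : a i₀ ≠ 0) (hmin : ∀ i, ε i = -1 → k i₀ ≤ k i) :
    Tendsto (factorLogDeriv ε k a) (𝓝[<] (k i₀)) atBot := by
  -- the reflection `y ↦ -y`, `ε ↦ -ε` exchanges the two ends of the interval
  have hneg : Tendsto (factorLogDeriv (-ε) k a) (𝓝[>] (-k i₀)) atTop :=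
    tendsto_factorLogDeriv_nhdsGT (fun i => by simpa [neg_eq_iff_eq_neg, or_comm] using hε i) hk
      (by simp [hε₀]) ha₀ fun i hi => hmin i (by simpa [neg_eq_iff_eq_neg] using hi)
  have := tendsto_neg_atTop_atBot.comp (hneg.comp (tendsto_neg_nhdsLT_neg (a := -k i₀)))
  rw [neg_neg] at this
  convert this using 1
  ext y
  simp [factorLogDeriv_neg]

theorem exists_factorLogDeriv_eq_zero (hε : ∀ i, ε i = 1 ∨ ε i = -1) (hk : ∀ i, 0 < k i)
    {ip im : ι} (hεp : ε ip = 1) (hap : a ip ≠ 0) (hkp : ∀ i, ε i = 1 → k ip ≤ k i)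
    (hεm : ε im = -1) (ham : a im ≠ 0) (hkm : ∀ i, ε i = -1 → k im ≤ k i) :
    ∃ ξ ∈ Ioo (-k ip) (k im), factorLogDeriv ε k a ξ = 0 := by
  have hI : (-k ip) < k im := by linarith [hk ip, hk im]
  have hcont : ContinuousOn (factorLogDeriv ε k a) (Ioo (-k ip) (k im)) := fun y hy =>
    (hasDerivAt_factorLogDeriv fun i => (linear_pos_of_mem_Ioo hε hkp hkm hy i).ne').continuousAt
      |>.continuousWithinAt
  exact isPreconnected_Ioo.intermediate_value_Iii (le_principal_iff.2 (Ioo_mem_nhdsLT hI))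
    (le_principal_iff.2 (Ioo_mem_nhdsGT hI)) hcont
    (tendsto_factorLogDeriv_nhdsLT hε hk hεm ham hkm)
    (tendsto_factorLogDeriv_nhdsGT hε hk hεp hap hkp) (mem_univ 0)

end FactorLogDeriv

theorem rootMultiplicity_derivative_eq_one {𝕜 : Type*} [NontriviallyNormedField 𝕜] {p : 𝕜[X]}
    {g : 𝕜 → 𝕜} {g' ξ : 𝕜} (hp' : ∀ᶠ y in 𝓝 ξ, (derivative p).eval y = p.eval y * g y)
    (hg : HasDerivAt g g' ξ) (hgξ : g ξ = 0) (hpξ : p.eval ξ ≠ 0) (hg' : g' ≠ 0) :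
    (derivative p).rootMultiplicity ξ = 1 := by
  have hroot : (derivative p).IsRoot ξ := by simp [IsRoot, hp'.self_of_nhds, hgξ]
  have hsecond : (derivative (derivative p)).eval ξ = p.eval ξ * g' := by
    refine (derivative p).hasDerivAt ξ |>.unique ?_
    refine (((p.hasDerivAt ξ).mul hg).congr_of_eventuallyEq hp').congr_deriv ?_
    simp [hgξ]
  have hsimple : ¬ (derivative (derivative p)).IsRoot ξ := by simp [IsRoot, hsecond, hpξ, hg']
  have hne : derivative p ≠ 0 := fun h => hsimple (by simp [h])
  have := (rootMultiplicity_pos hne).2 hroot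
  have := (one_lt_rootMultiplicity_iff_isRoot hne).not.2 (fun h => hsimple h.2)
  omega

section DerivMul

variable {f g : ℝ → ℝ} {l u ξ : ℝ}

theorem strictMonoOn_Ioc_of_hasDerivAt_mul (hξ : ξ ∈ Ioo l u)
    (hf : ∀ y ∈ Ioo l u, HasDerivAt f (f y * g y) y) (hfpos : ∀ y ∈ Ioo l u, 0 < f y)
    (hg : StrictAntiOn g (Ioo l u)) (hgξ : g ξ = 0) : StrictMonoOn f (Ioc l ξ) := by
  have hsub : Ioc l ξ ⊆ Ioo l u := Ioc_subset_Ioo_right hξ.2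
  refine strictMonoOn_of_hasDerivWithinAt_pos (convex_Ioc l ξ)
    (fun y hy => (hf y (hsub hy)).continuousAt.continuousWithinAt)
    (fun y hy => (hf y (hsub (interior_subset hy))).hasDerivWithinAt) fun y hy => ?_
  rw [interior_Ioc] at hy
  have hy' := hsub (Ioo_subset_Ioc_self hy)
  exact mul_pos (hfpos y hy') (hgξ ▸ hg hy' hξ hy.2)

theorem strictAntiOn_Ico_of_hasDerivAt_mul (hξ : ξ ∈ Ioo l u)
    (hf : ∀ y ∈ Ioo l u, HasDerivAt f (f y * g y) y) (hfpos : ∀ y ∈ Ioo l u, 0 < f y)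
    (hg : StrictAntiOn g (Ioo l u)) (hgξ : g ξ = 0) : StrictAntiOn f (Ico ξ u) := by
  have hsub : Ico ξ u ⊆ Ioo l u := Ico_subset_Ioo_left hξ.1
  refine strictAntiOn_of_hasDerivWithinAt_neg (convex_Ico ξ u)
    (fun y hy => (hf y (hsub hy)).continuousAt.continuousWithinAt)
    (fun y hy => (hf y (hsub (interior_subset hy))).hasDerivWithinAt) fun y hy => ?_
  rw [interior_Ico] at hy
  have hy' := hsub (Ioo_subset_Ico_self hy)
  exact mul_neg_of_pos_of_neg (hfpos y hy') (hgξ ▸ hg hξ hy' hy.1)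

end DerivMul

theorem stmt6 (n : ℕ) (ε : Fin n → ℝ) (hε : ∀ i, ε i = 1 ∨ ε i = -1)
    (k : Fin n → ℝ) (hk : ∀ i, 0 < k i) (a : Fin n → ℕ) (ha : ∀ i, 1 ≤ a i)
    (kp km : ℝ)
    (hkp : IsLeast {r | ∃ i, ε i = 1 ∧ k i = r} kp)
    (hkm : IsLeast {r | ∃ i, ε i = -1 ∧ k i = r} km)
    (h : ℝ[X]) (hh : h = ∏ i, (C (ε i) * X + C (k i)) ^ a i) :
    ∃ ξ ∈ Set.Ioo (-kp) km,
      (derivative h).eval ξ = 0 ∧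
      (∀ ζ ∈ Set.Ioo (-kp) km, (derivative h).eval ζ = 0 → ζ = ξ) ∧
      (derivative h).rootMultiplicity ξ = 1 ∧
      IsLocalMax (fun y => h.eval y) ξ ∧
      StrictAntiOn (fun y => h.eval y) (Set.Ioo ξ km) ∧
      (0 < ξ ↔ 0 < ∑ i, ε i * (a i : ℝ) / k i) := by
  obtain ⟨⟨ip, hεp, rfl⟩, hkp⟩ := hkp
  obtain ⟨⟨im, hεm, rfl⟩, hkm⟩ := hkm
  have hkp' : ∀ i, ε i = 1 → k ip ≤ k i := fun i hi => hkp ⟨i, hi, rfl⟩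
  have hkm' : ∀ i, ε i = -1 → k im ≤ k i := fun i hi => hkm ⟨i, hi, rfl⟩
  have hap : a ip ≠ 0 := Nat.one_le_iff_ne_zero.1 (ha ip)
  set I := Ioo (-k ip) (k im)
  have hfac : ∀ y ∈ I, ∀ i, 0 < ε i * y + k i := fun y hy => linear_pos_of_mem_Ioo hε hkp' hkm' hy
  have heval : ∀ y, h.eval y = ∏ i, (ε i * y + k i) ^ a i := by simp [hh, eval_prod]
  have hpos : ∀ y ∈ I, 0 < h.eval y := fun y hy =>
    heval y ▸ Finset.prod_pos fun i _ => pow_pos (hfac y hy i) _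
  have hderiv : ∀ y ∈ I, HasDerivAt (fun t => h.eval t) (h.eval y * factorLogDeriv ε k a y) y :=
    fun y hy => by simpa only [heval] using hasDerivAt_prod_linear_pow fun i => (hfac y hy i).ne'
  have hderiv_eval : ∀ y ∈ I, (derivative h).eval y = h.eval y * factorLogDeriv ε k a y :=
    fun y hy => (h.hasDerivAt y).unique (hderiv y hy)
  have hεp0 : ε ip ≠ 0 := by simp [hεp]
  have hanti : StrictAntiOn (factorLogDeriv ε k a) I :=
    strictAntiOn_factorLogDeriv (convex_Ioo _ _) (fun y hy i => (hfac y hy i).ne') hεp0 hap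
  obtain ⟨ξ, hξ, hGξ⟩ := exists_factorLogDeriv_eq_zero hε hk hεp hap hkp' hεm
    (Nat.one_le_iff_ne_zero.1 (ha im)) hkm'
  have hGdiff := (hasDerivAt_factorLogDeriv (a := a) fun i => (hfac ξ hξ i).ne').differentiableAt
  refine ⟨ξ, hξ, by rw [hderiv_eval ξ hξ, hGξ, mul_zero], fun ζ hζ hζroot => ?_, ?_,
    isLocalMax_of_mono_anti hξ.1 hξ.2
      (strictMonoOn_Ioc_of_hasDerivAt_mul hξ hderiv hpos hanti hGξ).monotoneOn
      (strictAntiOn_Ico_of_hasDerivAt_mul hξ hderiv hpos hanti hGξ).antitoneOn,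
    (strictAntiOn_Ico_of_hasDerivAt_mul hξ hderiv hpos hanti hGξ).mono Ioo_subset_Ico_self, ?_⟩
  · refine hanti.injOn hζ hξ (hGξ ▸ ?_)
    rw [hderiv_eval ζ hζ] at hζroot
    exact (mul_eq_zero.1 hζroot).resolve_left (hpos ζ hζ).ne'
  · exact rootMultiplicity_derivative_eq_one
      (eventually_of_mem (Ioo_mem_nhds hξ.1 hξ.2) hderiv_eval) hGdiff.hasDerivAt hGξ
      (hpos ξ hξ).ne' (deriv_factorLogDeriv_neg (fun i => (hfac ξ hξ i).ne') hεp0 hap).ne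
  · have h0 : (0 : ℝ) ∈ I := ⟨neg_lt_zero.2 (hk ip), hk im⟩
    rw [← hanti.lt_iff_gt hξ h0, hGξ]
    simp [factorLogDeriv]
end

section
/- Under the setup of the previous statement (h with both positive and negative real roots, k_-, k_+ as defined, ξ the unique critical point of h in (-k_+, k_-)), suppose ξ ∈ (0, k_-) and h'' has a root y* in (0, ξ). Then h'' has a root in (0, ξ) if and only if θ := γ² − Σ_{i=1}^n a_i/k_i² > 0, where γ = Σ_{i=1}^n ε_i·a_i/k_i. -/
/-!
On `[0, ξ]` every factor `ε i * y + k i` is positive, and there `h' = h S` and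
`h'' = h (S ^ 2 - T)` with `S = ∑ ε i a i / (ε i y + k i)` and `T = ∑ a i / (ε i y + k i) ^ 2`.
As `S' = -T < 0` and `S ξ = 0`, `S > 0` on `[0, ξ)`. With `U = ∑ ε i a i / (ε i y + k i) ^ 3`,
`g = S ^ 2 - T` has `g' = 2 (U - S T)`, and at a zero of `g` a termwise comparison gives
`U < S T` (strictly thanks to a factor with `ε i = -1`). So `g` crosses zero only downwards
on `[0, ξ)`; since `g ξ = -T ξ < 0`, it vanishes in `(0, ξ)` iff `g 0 = θ > 0`.
-/

open Polynomial Filter Set Topology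

lemma exists_pos_left_neg_right_of_deriv_neg {g : ℝ → ℝ} {x a b : ℝ} (hg : deriv g x < 0)
    (hx : g x = 0) (ha : a < x) (hb : x < b) :
    (∃ w ∈ Ioo a x, 0 < g w) ∧ ∃ w ∈ Ioo x b, g w < 0 := by
  have hsign := eventually_nhdsWithin_sign_eq_of_deriv_neg hg hx
  constructor
  · obtain ⟨w, hsw, hw⟩ :=
      ((hsign.filter_mono nhdsWithin_le_nhds).and (Ioo_mem_nhdsLT ha) :
        ∀ᶠ w in 𝓝[<] x, _).exists
    rw [sign_pos (sub_pos.2 hw.2), sign_eq_one_iff] at hsw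
    exact ⟨w, hw, hsw⟩
  · obtain ⟨w, hsw, hw⟩ :=
      ((hsign.filter_mono nhdsWithin_le_nhds).and (Ioo_mem_nhdsGT hb) :
        ∀ᶠ w in 𝓝[>] x, _).exists
    rw [sign_neg (sub_neg.2 hw.1), sign_eq_neg_one_iff] at hsw
    exact ⟨w, hw, hsw⟩

/-- Otherwise the last zero of `g` before a point `w < c` with `g w > 0` would be followed by
negative values, and hence by a further zero before `w`. -/
theorem pos_of_deriv_neg_at_zeros {g : ℝ → ℝ} {a c : ℝ} (hac : a < c)
    (hg : ContinuousOn g (Icc a c)) (hc : g c = 0)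
    (hzeros : ∀ y ∈ Icc a c, g y = 0 → deriv g y < 0) : 0 < g a := by
  by_contra! hga
  obtain ⟨⟨w, hw, hgw⟩, -⟩ :=
    exists_pos_left_neg_right_of_deriv_neg (hzeros c ⟨hac.le, le_rfl⟩ hc) hc hac (lt_add_one c)
  have hgw' : ContinuousOn g (Icc a w) := hg.mono (Icc_subset_Icc_right hw.2.le)
  set Z := Icc a w ∩ g ⁻¹' {0}
  have hZ_closed : IsClosed Z := hgw'.preimage_isClosed_of_isClosed isClosed_Icc isClosed_singleton
  obtain ⟨z₀, hz₀, hgz₀⟩ := intermediate_value_Icc hw.1.le hgw' ⟨hga, hgw.le⟩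
  have hZ_bdd : BddAbove Z := ⟨w, fun y hy => hy.1.2⟩
  obtain ⟨⟨hz_a, hz_w⟩, hgz⟩ := hZ_closed.csSup_mem ⟨z₀, hz₀, hgz₀⟩ hZ_bdd
  set z := sSup Z
  have hzw : z < w := hz_w.lt_of_ne fun h => hgw.ne' (h ▸ hgz)
  obtain ⟨-, t, ht, hgt⟩ := exists_pos_left_neg_right_of_deriv_neg
    (hzeros z ⟨hz_a, hz_w.trans hw.2.le⟩ hgz) hgz (sub_one_lt z) hzw
  obtain ⟨u, hu, hgu⟩ :=
    intermediate_value_Icc ht.2.le (hgw'.mono (Icc_subset_Icc_left (hz_a.trans ht.1.le)))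
      ⟨hgt.le, hgw.le⟩
  have : u ≤ z := le_csSup hZ_bdd ⟨⟨hz_a.trans (ht.1.le.trans hu.1), hu.2⟩, hgu⟩
  linarith [ht.1, hu.1]

lemma hasDerivAt_prod_of_hasDerivAt_mul {ι : Type*} [Fintype ι] {f : ι → ℝ → ℝ}
    {s : ι → ℝ} {y : ℝ} (hf : ∀ i, HasDerivAt (f i) (f i y * s i) y) :
    HasDerivAt (fun z => ∏ i, f i z) ((∏ i, f i y) * ∑ i, s i) y := by
  classical
  refine (HasDerivAt.fun_finsetProd (u := Finset.univ) (fun i _ => hf i)).congr_deriv ?_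
  rw [eq_comm, Finset.mul_sum]
  refine Finset.sum_congr rfl fun i _ => ?_
  rw [smul_eq_mul, ← Finset.mul_prod_erase Finset.univ _ (Finset.mem_univ i)]
  ring

lemma hasDerivAt_affine_pow {e k y : ℝ} (m : ℕ) (hy : e * y + k ≠ 0) :
    HasDerivAt (fun z => (e * z + k) ^ m) ((e * y + k) ^ m * (e * m / (e * y + k))) y := by
  refine ((((hasDerivAt_id y).const_mul e).add_const k).fun_pow m).congr_deriv ?_
  cases m with
  | zero => simp
  | succ m => rw [Nat.add_sub_cancel, id]; field_simp; ring

lemma hasDerivAt_div_affine_pow {e k y : ℝ} (A : ℝ) (q : ℕ) (hy : e * y + k ≠ 0) :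
    HasDerivAt (fun z => A / (e * z + k) ^ q) (-(q * e * A) / (e * y + k) ^ (q + 1)) y := by
  have := (((((hasDerivAt_id y).const_mul e).add_const k).fun_pow q).inv
    (pow_ne_zero q hy)).const_mul A
  simp only [Pi.inv_apply, id, ← div_eq_mul_inv] at this
  refine this.congr_deriv ?_
  cases q with
  | zero => simp
  | succ q => rw [Nat.add_sub_cancel]; field_simp; ring

section FactorProduct

variable {ι : Type*} [Fintype ι] (ε k : ι → ℝ) (a : ι → ℕ)

noncomputable section

def factorProd (y : ℝ) : ℝ := ∏ i, (ε i * y + k i) ^ a i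

def logDerivSum (y : ℝ) : ℝ := ∑ i, ε i * a i / (ε i * y + k i)

def invSqSum (y : ℝ) : ℝ := ∑ i, (a i : ℝ) / (ε i * y + k i) ^ 2

def invCubeSum (y : ℝ) : ℝ := ∑ i, ε i * a i / (ε i * y + k i) ^ 3

/-- `h'' / h` for `h = factorProd ε k a`, when `ε i ^ 2 = 1`. -/
def secondDerivRatio (y : ℝ) : ℝ := logDerivSum ε k a y ^ 2 - invSqSum ε k a y

end

variable {ε k a} {y : ℝ}

lemma hasDerivAt_factorProd (hy : ∀ i, ε i * y + k i ≠ 0) :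
    HasDerivAt (factorProd ε k a) (factorProd ε k a y * logDerivSum ε k a y) y :=
  hasDerivAt_prod_of_hasDerivAt_mul fun i => hasDerivAt_affine_pow (a i) (hy i)

lemma hasDerivAt_logDerivSum (hε : ∀ i, ε i ^ 2 = 1) (hy : ∀ i, ε i * y + k i ≠ 0) :
    HasDerivAt (logDerivSum ε k a) (-invSqSum ε k a y) y := by
  have := HasDerivAt.fun_sum (u := Finset.univ)
    fun i _ => hasDerivAt_div_affine_pow (ε i * a i) 1 (hy i)
  simp only [pow_one] at this
  refine this.congr_deriv ?_
  simp only [invSqSum, ← Finset.sum_neg_distrib]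
  refine Finset.sum_congr rfl fun i _ => ?_
  linear_combination (-(a i : ℝ) / (ε i * y + k i) ^ 2) * hε i

lemma hasDerivAt_invSqSum (hy : ∀ i, ε i * y + k i ≠ 0) :
    HasDerivAt (invSqSum ε k a) (-2 * invCubeSum ε k a y) y := by
  have := HasDerivAt.fun_sum (u := Finset.univ)
    fun i _ => hasDerivAt_div_affine_pow (a i : ℝ) 2 (hy i)
  refine this.congr_deriv ?_
  simp only [invCubeSum, Finset.mul_sum]
  refine Finset.sum_congr rfl fun i _ => ?_
  ring

lemma hasDerivAt_secondDerivRatio (hε : ∀ i, ε i ^ 2 = 1) (hy : ∀ i, ε i * y + k i ≠ 0) :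
    HasDerivAt (secondDerivRatio ε k a)
      (2 * (invCubeSum ε k a y - logDerivSum ε k a y * invSqSum ε k a y)) y := by
  refine (((hasDerivAt_logDerivSum hε hy).fun_pow 2).sub (hasDerivAt_invSqSum hy)).congr_deriv ?_
  ring

lemma eval_prod_factors (y : ℝ) :
    (∏ i, (C (ε i) * X + C (k i)) ^ a i).eval y = factorProd ε k a y := by
  simp [factorProd, eval_prod]

lemma eval_derivative_prod_factors (hy : ∀ i, ε i * y + k i ≠ 0) :
    (derivative (∏ i, (C (ε i) * X + C (k i)) ^ a i)).eval y =
      factorProd ε k a y * logDerivSum ε k a y := by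
  rw [← Polynomial.deriv, _root_.funext eval_prod_factors]
  exact (hasDerivAt_factorProd hy).deriv

lemma eval_derivative_derivative_prod_factors (hε : ∀ i, ε i ^ 2 = 1)
    (hy : ∀ i, ε i * y + k i ≠ 0) :
    (derivative (derivative (∏ i, (C (ε i) * X + C (k i)) ^ a i))).eval y =
      factorProd ε k a y * secondDerivRatio ε k a y := by
  have hnear : ∀ᶠ z in 𝓝 y, ∀ i, ε i * z + k i ≠ 0 :=
    eventually_all.2 fun i =>
      (by fun_prop : Continuous fun z => ε i * z + k i).continuousAt.eventually_ne (hy i)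
  have heq : (fun z => (derivative (∏ i, (C (ε i) * X + C (k i)) ^ a i)).eval z) =ᶠ[𝓝 y]
      fun z => factorProd ε k a z * logDerivSum ε k a z :=
    hnear.mono fun z hz => eval_derivative_prod_factors hz
  rw [← Polynomial.deriv, heq.deriv_eq]
  refine ((hasDerivAt_factorProd hy).mul (hasDerivAt_logDerivSum hε hy)).deriv.trans ?_
  rw [secondDerivRatio]
  ring

end FactorProduct

section Signs

variable {ι : Type*} [Fintype ι] {ε k : ι → ℝ} {a : ι → ℕ} {y : ℝ}

lemma affine_pos_of_mem_Ico {e k km y : ℝ} (he : e = 1 ∨ e = -1) (hk : 0 < k)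
    (hkm : e = -1 → km ≤ k) (hy : y ∈ Ico 0 km) : 0 < e * y + k := by
  rcases he with rfl | rfl
  · linarith [hy.1]
  · linarith [hy.2, hkm rfl]

lemma factorProd_pos (hy : ∀ i, 0 < ε i * y + k i) : 0 < factorProd ε k a y :=
  Finset.prod_pos fun i _ => pow_pos (hy i) _

lemma invSqSum_pos [Nonempty ι] (ha : ∀ i, 1 ≤ a i) (hy : ∀ i, ε i * y + k i ≠ 0) :
    0 < invSqSum ε k a y :=
  Finset.sum_pos (fun i _ => div_pos (by exact_mod_cast ha i) (sq_pos_iff.2 (hy i)))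
    Finset.univ_nonempty

lemma eval_derivative_derivative_prod_factors_eq_zero_iff (hε : ∀ i, ε i ^ 2 = 1)
    (hy : ∀ i, 0 < ε i * y + k i) :
    (derivative (derivative (∏ i, (C (ε i) * X + C (k i)) ^ a i))).eval y = 0 ↔
      secondDerivRatio ε k a y = 0 := by
  rw [eval_derivative_derivative_prod_factors hε fun i => (hy i).ne',
    mul_eq_zero, or_iff_right (factorProd_pos hy).ne']

lemma continuousOn_secondDerivRatio {s : Set ℝ} (hε : ∀ i, ε i ^ 2 = 1)
    (hs : ∀ y ∈ s, ∀ i, ε i * y + k i ≠ 0) : ContinuousOn (secondDerivRatio ε k a) s :=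
  fun y hy => (hasDerivAt_secondDerivRatio hε (hs y hy)).continuousAt.continuousWithinAt

lemma logDerivSum_pos_of_zero [Nonempty ι] {x ξ : ℝ} (hε : ∀ i, ε i ^ 2 = 1)
    (ha : ∀ i, 1 ≤ a i) (hs : ∀ y ∈ Icc x ξ, ∀ i, ε i * y + k i ≠ 0)
    (hξ : logDerivSum ε k a ξ = 0) (hy : y ∈ Ico x ξ) : 0 < logDerivSum ε k a y := by
  have hanti : StrictAntiOn (logDerivSum ε k a) (Icc x ξ) := by
    refine strictAntiOn_of_deriv_neg (convex_Icc x ξ)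
      (fun z hz => (hasDerivAt_logDerivSum hε (hs z hz)).continuousAt.continuousWithinAt)
      fun z hz => ?_
    rw [interior_Icc] at hz
    rw [(hasDerivAt_logDerivSum hε (hs z (Ioo_subset_Icc_self hz))).deriv, neg_lt_zero]
    exact invSqSum_pos ha (hs z (Ioo_subset_Icc_self hz))
  simpa [hξ] using hanti (Ico_subset_Icc_self hy) (right_mem_Icc.2 (hy.1.trans hy.2.le)) hy.2

/-- Termwise: at a zero, `logDerivSum ^ 2 = invSqSum ≥ (1 / (ε i * y + k i)) ^ 2` gives
`1 / (ε i * y + k i) ≤ logDerivSum`, which handles the terms with `ε i = 1`; the terms with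
`ε i = -1` are negative. -/
lemma invCubeSum_lt_mul_invSqSum (hε : ∀ i, ε i = 1 ∨ ε i = -1) (ha : ∀ i, 1 ≤ a i)
    (hy : ∀ i, 0 < ε i * y + k i) (hS : 0 < logDerivSum ε k a y)
    (hzero : secondDerivRatio ε k a y = 0) {i₀ : ι} (hi₀ : ε i₀ = -1) :
    invCubeSum ε k a y < logDerivSum ε k a y * invSqSum ε k a y := by
  set S := logDerivSum ε k a y
  have hT : invSqSum ε k a y = S ^ 2 := by rw [secondDerivRatio] at hzero; linarith
  have hterm_lt : ∀ i, ε i = -1 →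
      ε i * a i / (ε i * y + k i) ^ 3 < S * (a i / (ε i * y + k i) ^ 2) := by
    intro i hi
    set c := ε i * y + k i
    have hc := hy i
    have hai : (1 : ℝ) ≤ a i := by exact_mod_cast ha i
    rw [hi, neg_one_mul, neg_div]
    have : 0 < S * (a i / c ^ 2) := by positivity
    have : 0 < (a i : ℝ) / c ^ 3 := by positivity
    linarith
  have hterm_le : ∀ i,
      ε i * a i / (ε i * y + k i) ^ 3 ≤ S * (a i / (ε i * y + k i) ^ 2) := by
    intro i
    rcases hε i with hi | hi
    · set c := ε i * y + k i
      have hc := hy i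
      have hai : (1 : ℝ) ≤ a i := by exact_mod_cast ha i
      have hsq : (1 / c) ^ 2 ≤ S ^ 2 := calc
        (1 / c) ^ 2 ≤ a i / c ^ 2 := by rw [div_pow, one_pow]; gcongr
        _ ≤ S ^ 2 := hT ▸ Finset.single_le_sum
          (f := fun j => (a j : ℝ) / (ε j * y + k j) ^ 2) (fun j _ => by positivity)
          (Finset.mem_univ i)
      have hinv : 1 / c ≤ S := (pow_le_pow_iff_left₀ (by positivity) hS.le two_ne_zero).1 hsq
      calc ε i * a i / c ^ 3 = a i / c ^ 2 * (1 / c) := by rw [hi]; field_simp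
        _ ≤ a i / c ^ 2 * S := by gcongr
        _ = S * (a i / c ^ 2) := mul_comm _ _
    · exact (hterm_lt i hi).le
  rw [invSqSum, Finset.mul_sum]
  exact Finset.sum_lt_sum (fun i _ => hterm_le i)
    ⟨i₀, Finset.mem_univ i₀, hterm_lt i₀ hi₀⟩

lemma deriv_secondDerivRatio_neg (hε : ∀ i, ε i = 1 ∨ ε i = -1) (ha : ∀ i, 1 ≤ a i)
    (hy : ∀ i, 0 < ε i * y + k i) (hS : 0 < logDerivSum ε k a y)
    (hzero : secondDerivRatio ε k a y = 0) {i₀ : ι} (hi₀ : ε i₀ = -1) :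
    deriv (secondDerivRatio ε k a) y < 0 := by
  rw [(hasDerivAt_secondDerivRatio (fun i => sq_eq_one_iff.2 (hε i)) fun i => (hy i).ne').deriv]
  linarith [invCubeSum_lt_mul_invSqSum hε ha hy hS hzero hi₀]

theorem exists_secondDerivRatio_eq_zero_iff {x ξ : ℝ} (hε : ∀ i, ε i = 1 ∨ ε i = -1)
    (ha : ∀ i, 1 ≤ a i) (hpos : ∀ y ∈ Icc x ξ, ∀ i, 0 < ε i * y + k i) (hxξ : x < ξ)
    (hξ : logDerivSum ε k a ξ = 0) {i₀ : ι} (hi₀ : ε i₀ = -1) :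
    (∃ y ∈ Ioo x ξ, secondDerivRatio ε k a y = 0) ↔ 0 < secondDerivRatio ε k a x := by
  have : Nonempty ι := ⟨i₀⟩
  have hε2 : ∀ i, ε i ^ 2 = 1 := fun i => sq_eq_one_iff.2 (hε i)
  have hne : ∀ y ∈ Icc x ξ, ∀ i, ε i * y + k i ≠ 0 := fun y hy i => (hpos y hy i).ne'
  have hcont := continuousOn_secondDerivRatio (a := a) hε2 hne
  constructor
  · rintro ⟨y, hy, hy0⟩
    refine pos_of_deriv_neg_at_zeros hy.1 (hcont.mono (Icc_subset_Icc_right hy.2.le)) hy0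
      fun z hz hz0 => ?_
    have hz' : z ∈ Ico x ξ := ⟨hz.1, hz.2.trans_lt hy.2⟩
    exact deriv_secondDerivRatio_neg hε ha (hpos z (Ico_subset_Icc_self hz'))
      (logDerivSum_pos_of_zero hε2 ha hne hξ hz') hz0 hi₀
  · intro hx
    have hgξ : secondDerivRatio ε k a ξ < 0 := by
      simpa [secondDerivRatio, hξ] using invSqSum_pos ha (hne ξ (right_mem_Icc.2 hxξ.le))
    exact intermediate_value_Ioo' hxξ.le hcont ⟨hgξ, hx⟩

end Signs

theorem stmt7_general (n : ℕ) (ε : Fin n → ℝ) (hε : ∀ i, ε i = 1 ∨ ε i = -1)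
    (k : Fin n → ℝ) (hk : ∀ i, 0 < k i) (a : Fin n → ℕ) (ha : ∀ i, 1 ≤ a i)
    (km : ℝ)
    (hkm : IsLeast {r | ∃ i, ε i = -1 ∧ k i = r} km)
    (h : ℝ[X]) (hh : h = ∏ i, (C (ε i) * X + C (k i)) ^ a i)
    (ξ : ℝ) (hξ : ξ ∈ Set.Ioo (0 : ℝ) km) (hcrit : (derivative h).eval ξ = 0) :
    (∃ y ∈ Set.Ioo 0 ξ, (derivative (derivative h)).eval y = 0) ↔
      0 < (∑ i, ε i * (a i : ℝ) / k i) ^ 2 - ∑ i, (a i : ℝ) / (k i) ^ 2 := by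
  obtain ⟨⟨i₀, hi₀, -⟩, hkm_le⟩ := hkm
  subst hh
  have hpos : ∀ y ∈ Icc 0 ξ, ∀ i, 0 < ε i * y + k i := fun y hy i =>
    affine_pos_of_mem_Ico (hε i) (hk i) (fun h => hkm_le ⟨i, h, rfl⟩)
      ⟨hy.1, hy.2.trans_lt hξ.2⟩
  have hpos_ξ := hpos ξ (right_mem_Icc.2 hξ.1.le)
  have hSξ : logDerivSum ε k a ξ = 0 := by
    rw [eval_derivative_prod_factors fun i => (hpos_ξ i).ne'] at hcrit
    exact (mul_eq_zero.1 hcrit).resolve_left (factorProd_pos hpos_ξ).ne'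
  have hg0 : secondDerivRatio ε k a 0 =
      (∑ i, ε i * (a i : ℝ) / k i) ^ 2 - ∑ i, (a i : ℝ) / (k i) ^ 2 := by
    simp [secondDerivRatio, logDerivSum, invSqSum]
  rw [← hg0, ← exists_secondDerivRatio_eq_zero_iff hε ha hpos hξ.1 hSξ hi₀]
  refine exists_congr fun y => and_congr_right fun hy => ?_
  exact eval_derivative_derivative_prod_factors_eq_zero_iff (fun i => sq_eq_one_iff.2 (hε i))
    (hpos y (Ioo_subset_Icc_self hy))

theorem stmt7 (n : ℕ) (ε : Fin n → ℝ) (hε : ∀ i, ε i = 1 ∨ ε i = -1)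
    (k : Fin n → ℝ) (hk : ∀ i, 0 < k i) (a : Fin n → ℕ) (ha : ∀ i, 1 ≤ a i)
    (kp km : ℝ)
    (hkp : IsLeast {r | ∃ i, ε i = 1 ∧ k i = r} kp)
    (hkm : IsLeast {r | ∃ i, ε i = -1 ∧ k i = r} km)
    (h : ℝ[X]) (hh : h = ∏ i, (C (ε i) * X + C (k i)) ^ a i)
    (ξ : ℝ) (hξ : ξ ∈ Set.Ioo (0 : ℝ) km) (hcrit : (derivative h).eval ξ = 0)
    (huniq : ∀ ζ ∈ Set.Ioo (-kp) km, (derivative h).eval ζ = 0 → ζ = ξ) :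
    (∃ y ∈ Set.Ioo 0 ξ, (derivative (derivative h)).eval y = 0) ↔
      0 < (∑ i, ε i * (a i : ℝ) / k i) ^ 2 - ∑ i, (a i : ℝ) / (k i) ^ 2 :=
  stmt7_general n ε hε k hk a ha km hkm h hh ξ hξ hcrit
end

section
/- Let h(y) = ∏_{i=1}^n (ε_i·y + k_i)^{a_i} with ε_i ∈ {±1}, both signs occurring, k_i > 0, a_i ≥ 1, k_- = min{k_i : ε_i = -1}, and let κ > 0. Then the equation h(y) = κ·y has at most three solutions in (0, k_-), counted with multiplicity. -/
open Polynomial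

/-!
Let `#ᵢ p` count the roots of `p` in an interval `I`, with multiplicity. If `q` has no zero
in `I`, Rolle's theorem for `p / q`, whose derivative is `W(q, p) / q²` with `W` the Wronskian,
gives `#ᵢ p ≤ #ᵢ W(q, p) + 1`; a root of `p` of multiplicity `m` is a root of `W(q, p)` of
multiplicity at least `m - 1`.

With `I = (0, k_-)`, use this first for `f = h - κX` and `q = X`, where `W(X, f) = Xh' - h`,
then for `Xh' - h` and `q = Xh`, where `W(Xh, Xh' - h) = P := X²(hh'' - h'²) + h²`. On `I`,
`P / h² = 1 + x² (log h)'' = 1 - ∑ aᵢ (εᵢx / (εᵢx + kᵢ))²` has negative derivative, so the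
third step, with `q = h²`, yields `#ᵢ P ≤ 0 + 1`.
-/

open Set Filter Topology

theorem hasDerivAt_linear_div_sq {e c x : ℝ} (hx : e * x + c ≠ 0) :
    HasDerivAt (fun t => (e * t / (e * t + c)) ^ 2) (2 * e ^ 2 * c * x / (e * x + c) ^ 3) x := by
  have hlin : HasDerivAt (fun t => e * t) e x := by simpa using (hasDerivAt_id x).const_mul e
  refine ((hlin.fun_div (hlin.add_const c) hx).fun_pow 2).congr_deriv ?_
  norm_num
  field_simp
  ring

namespace Polynomial

theorem rootMultiplicity_sub_one_le_rootMultiplicity_wronskian {R : Type*} [CommRing R]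
    {p q : R[X]} (hW : wronskian q p ≠ 0) (x : R) :
    p.rootMultiplicity x - 1 ≤ (wronskian q p).rootMultiplicity x := by
  have hp := pow_rootMultiplicity_dvd p x
  rw [le_rootMultiplicity_iff hW]
  exact dvd_sub ((pow_sub_one_dvd_derivative_of_pow_dvd hp).mul_left q)
    (((pow_dvd_pow _ (Nat.sub_le _ _)).trans hp).mul_left _)

section Rolle

variable {p q : ℝ[X]} {a b : ℝ}

theorem hasDerivAt_eval_div_eval {x : ℝ} (hq : q.eval x ≠ 0) :
    HasDerivAt (fun t => p.eval t / q.eval t) ((wronskian q p).eval x / q.eval x ^ 2) x := by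
  have hW : (wronskian q p).eval x =
      (derivative p).eval x * q.eval x - p.eval x * (derivative q).eval x := by
    simp only [wronskian, eval_sub, eval_mul]
    ring
  rw [hW]
  exact (p.hasDerivAt x).fun_div (q.hasDerivAt x) hq

theorem card_roots_toFinset_filter_le_card_wronskian_sdiff_succ
    (hq : ∀ x ∈ Ioo a b, q.eval x ≠ 0) (hW : wronskian q p ≠ 0) :
    (p.roots.filter fun y => a < y ∧ y < b).toFinset.card ≤
      (((wronskian q p).roots.filter fun y => a < y ∧ y < b).toFinset \
        (p.roots.filter fun y => a < y ∧ y < b).toFinset).card + 1 := by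
  have hp : p ≠ 0 := by rintro rfl; exact hW (wronskian_zero_right q)
  refine Finset.card_le_sdiff_of_interleaved fun x hx y hy hxy _ => ?_
  simp only [Multiset.mem_toFinset, Multiset.mem_filter, mem_roots hp, IsRoot.def] at hx hy
  have hsub : Icc x y ⊆ Ioo a b := Icc_subset_Ioo hx.2.1 hy.2.2
  obtain ⟨z, hz, hz0⟩ := exists_hasDerivAt_eq_zero hxy
    (fun t ht =>
      (hasDerivAt_eval_div_eval (p := p) (hq t (hsub ht))).continuousAt.continuousWithinAt)
    (by simp only [hx.1, hy.1, zero_div])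
    (fun t ht => hasDerivAt_eval_div_eval (hq t (hsub (Ioo_subset_Icc_self ht))))
  have hza := hsub (Ioo_subset_Icc_self hz)
  refine ⟨z, ?_, hz⟩
  simp only [Multiset.mem_toFinset, Multiset.mem_filter, mem_roots hW, IsRoot.def]
  exact ⟨by simpa [hq z hza] using hz0, hza⟩

theorem card_roots_filter_le_card_wronskian_succ
    (hq : ∀ x ∈ Ioo a b, q.eval x ≠ 0) (hW : wronskian q p ≠ 0) :
    Multiset.card (p.roots.filter fun y => a < y ∧ y < b) ≤
      Multiset.card ((wronskian q p).roots.filter fun y => a < y ∧ y < b) + 1 := by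
  set m := p.roots.filter fun y => a < y ∧ y < b
  set mW := (wronskian q p).roots.filter fun y => a < y ∧ y < b
  set Z := mW.toFinset \ m.toFinset
  have hZ : m.toFinset.card ≤ Z.card + 1 :=
    card_roots_toFinset_filter_le_card_wronskian_sdiff_succ hq hW
  -- the surplus multiplicities of the roots of `p`, plus the Rolle points
  have hle : m - m.dedup + Z.val ≤ mW := by
    refine Multiset.le_iff_count.2 fun x => ?_
    rw [Multiset.count_add, Multiset.count_sub, Multiset.count_dedup]
    by_cases hxm : x ∈ m
    · have hxZ : x ∉ Z.val := fun h => (Finset.mem_sdiff.1 h).2 (Multiset.mem_toFinset.2 hxm)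
      have hI := (Multiset.mem_filter.1 hxm).2
      rw [if_pos hxm, Multiset.count_eq_zero.2 hxZ, add_zero, Multiset.count_filter, if_pos hI,
        Multiset.count_filter, if_pos hI, count_roots, count_roots]
      exact rootMultiplicity_sub_one_le_rootMultiplicity_wronskian hW x
    · have hZ : Z.val ≤ mW :=
        (Finset.val_le_iff.2 Finset.sdiff_subset).trans (Multiset.dedup_le mW)
      rw [Multiset.count_eq_zero.2 hxm, zero_tsub, zero_add]
      exact Multiset.count_le_of_le x hZ
  have hcard := Multiset.card_le_card hle
  rw [Multiset.card_add, Multiset.card_sub (Multiset.dedup_le m), Finset.card_val,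
    ← Multiset.card_toFinset] at hcard
  have := Multiset.card_le_card (Multiset.dedup_le m)
  rw [← Multiset.card_toFinset] at this
  omega

end Rolle

section SecondLogDeriv

theorem wronskian_derivative_mul {R : Type*} [CommRing R] (p q : R[X]) :
    wronskian (p * q) (derivative (p * q)) =
      p ^ 2 * wronskian q (derivative q) + q ^ 2 * wronskian p (derivative p) := by
  simp only [wronskian, derivative_mul, derivative_add]
  ring

variable {K : Type*} [Field K]

noncomputable def secondLogDeriv (p : K[X]) (x : K) : K :=
  (wronskian p (derivative p)).eval x / p.eval x ^ 2

theorem secondLogDeriv_mul {p q : K[X]} {x : K} (hp : p.eval x ≠ 0) (hq : q.eval x ≠ 0) :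
    secondLogDeriv (p * q) x = secondLogDeriv p x + secondLogDeriv q x := by
  simp only [secondLogDeriv, wronskian_derivative_mul, eval_add, eval_mul, eval_pow]
  field_simp
  ring

theorem secondLogDeriv_prod {ι : Type*} (s : Finset ι) (g : ι → K[X]) {x : K}
    (hg : ∀ i ∈ s, (g i).eval x ≠ 0) :
    secondLogDeriv (∏ i ∈ s, g i) x = ∑ i ∈ s, secondLogDeriv (g i) x := by
  classical
  induction s using Finset.induction_on with
  | empty => simp [secondLogDeriv, wronskian]
  | insert i s hi ih =>
    have hs : (∏ j ∈ s, g j).eval x ≠ 0 := by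
      rw [eval_prod]
      exact Finset.prod_ne_zero_iff.2 fun j hj => hg j (by simp [hj])
    rw [Finset.prod_insert hi, Finset.sum_insert hi, secondLogDeriv_mul (hg i (by simp)) hs,
      ih fun j hj => hg j (by simp [hj])]

theorem secondLogDeriv_pow {p : K[X]} {x : K} (hp : p.eval x ≠ 0) (m : ℕ) :
    secondLogDeriv (p ^ m) x = m * secondLogDeriv p x := by
  simpa using secondLogDeriv_prod (Finset.range m) (fun _ => p) (fun _ _ => hp)

theorem secondLogDeriv_linear (e c x : K) :
    secondLogDeriv (C e * X + C c) x = -e ^ 2 / (e * x + c) ^ 2 := by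
  simp only [secondLogDeriv, wronskian, derivative_add, derivative_mul, derivative_C, zero_mul,
    derivative_X, mul_one, zero_add, add_zero, mul_zero, zero_sub, eval_neg, eval_mul, eval_C,
    eval_add, eval_X]
  ring

end SecondLogDeriv

section LinearPowProd

variable {ι : Type*} [Fintype ι] {ε k : ι → ℝ} {a : ι → ℕ}

theorem eval_prod_linear_pow_pos {x : ℝ} (hx : ∀ i, 0 < ε i * x + k i) :
    0 < (∏ i, (C (ε i) * X + C (k i)) ^ a i).eval x := by
  simp only [eval_prod, eval_pow, eval_add, eval_mul, eval_C, eval_X]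
  exact Finset.prod_pos fun i _ => pow_pos (hx i) _

theorem secondLogDeriv_prod_linear_pow {x : ℝ} (hx : ∀ i, ε i * x + k i ≠ 0) :
    secondLogDeriv (∏ i, (C (ε i) * X + C (k i)) ^ a i) x =
      -∑ i, a i * ε i ^ 2 / (ε i * x + k i) ^ 2 := by
  have hl : ∀ i, (C (ε i) * X + C (k i)).eval x ≠ 0 := fun i => by simpa using hx i
  rw [secondLogDeriv_prod _ _ fun i _ => by simpa using pow_ne_zero (a i) (hl i),
    ← Finset.sum_neg_distrib]
  refine Finset.sum_congr rfl fun i _ => ?_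
  rw [secondLogDeriv_pow (hl i), secondLogDeriv_linear]
  ring

theorem eval_X_sq_mul_wronskian_add_sq_div {h : ℝ[X]}
    (hh : h = ∏ i, (C (ε i) * X + C (k i)) ^ a i) {x : ℝ} (hx : ∀ i, 0 < ε i * x + k i) :
    (X ^ 2 * wronskian h (derivative h) + h ^ 2).eval x / (h ^ 2).eval x =
      1 - ∑ i, a i * (ε i * x / (ε i * x + k i)) ^ 2 := by
  have hh0 : h.eval x ≠ 0 := (hh ▸ eval_prod_linear_pow_pos hx).ne'
  have hsl : secondLogDeriv h x = -∑ i, a i * ε i ^ 2 / (ε i * x + k i) ^ 2 :=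
    hh ▸ secondLogDeriv_prod_linear_pow fun i => (hx i).ne'
  calc (X ^ 2 * wronskian h (derivative h) + h ^ 2).eval x / (h ^ 2).eval x
      = 1 + x ^ 2 * secondLogDeriv h x := by
        simp only [secondLogDeriv, eval_add, eval_mul, eval_pow, eval_X]
        field_simp
        ring
    _ = 1 - ∑ i, a i * (ε i * x / (ε i * x + k i)) ^ 2 := by
        rw [hsl, mul_neg, ← sub_eq_add_neg, Finset.mul_sum]
        refine congrArg _ (Finset.sum_congr rfl fun i _ => ?_)
        rw [div_pow]
        ring

theorem hasDerivAt_one_sub_sum_sq_div {x : ℝ} (hx : ∀ i, ε i * x + k i ≠ 0) :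
    HasDerivAt (fun t => 1 - ∑ i, a i * (ε i * t / (ε i * t + k i)) ^ 2)
      (-∑ i, a i * (2 * ε i ^ 2 * k i * x / (ε i * x + k i) ^ 3)) x :=
  (HasDerivAt.fun_sum fun i _ =>
    (hasDerivAt_linear_div_sq (hx i)).const_mul (a i : ℝ)).const_sub 1

theorem card_roots_X_sq_mul_wronskian_add_sq_le_one {h : ℝ[X]}
    (hh : h = ∏ i, (C (ε i) * X + C (k i)) ^ a i) {b : ℝ} (hb : 0 < b) (hk : ∀ i, 0 < k i)
    (hl : ∀ i, ∀ x ∈ Ioo 0 b, 0 < ε i * x + k i) {i₀ : ι} (hε₀ : ε i₀ ≠ 0) (ha₀ : a i₀ ≠ 0) :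
    Multiset.card ((X ^ 2 * wronskian h (derivative h) + h ^ 2).roots.filter
      fun y => 0 < y ∧ y < b) ≤ 1 := by
  set P := X ^ 2 * wronskian h (derivative h) + h ^ 2
  have hh2 : ∀ x ∈ Ioo 0 b, (h ^ 2).eval x ≠ 0 := fun x hx => by
    simpa only [eval_pow] using pow_ne_zero 2 (hh ▸ eval_prod_linear_pow_pos (hl · x hx)).ne'
  have hderiv_neg : ∀ x ∈ Ioo 0 b,
      -∑ i, a i * (2 * ε i ^ 2 * k i * x / (ε i * x + k i) ^ 3) < 0 := by
    intro x hx
    have := hx.1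
    refine neg_neg_iff_pos.2 (Finset.sum_pos' (fun i _ => ?_) ⟨i₀, Finset.mem_univ _, ?_⟩)
    · have := hk i
      have := hl i x hx
      positivity
    · have := hk i₀
      have := hl i₀ x hx
      have : (0 : ℝ) < a i₀ := by exact_mod_cast Nat.pos_of_ne_zero ha₀
      positivity
  have hW : ∀ x ∈ Ioo 0 b, (wronskian (h ^ 2) P).eval x ≠ 0 := by
    intro x hx hW0
    have hev : (fun t => P.eval t / (h ^ 2).eval t) =ᶠ[𝓝 x]
        fun t => 1 - ∑ i, a i * (ε i * t / (ε i * t + k i)) ^ 2 :=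
      eventually_of_mem (Ioo_mem_nhds hx.1 hx.2) fun t ht =>
        eval_X_sq_mul_wronskian_add_sq_div hh (hl · t ht)
    have huniq := (hasDerivAt_eval_div_eval (hh2 x hx)).unique
      ((hasDerivAt_one_sub_sum_sq_div (a := a) fun i => (hl i x hx).ne').congr_of_eventuallyEq hev)
    rw [hW0, zero_div] at huniq
    linarith [hderiv_neg x hx]
  have hW0 : wronskian (h ^ 2) P ≠ 0 := fun h0 =>
    hW (b / 2) ⟨by linarith, by linarith⟩ (by rw [h0, eval_zero])
  have hroots : ((wronskian (h ^ 2) P).roots.filter fun y => 0 < y ∧ y < b) = 0 :=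
    Multiset.filter_eq_nil.2 fun x hx hI => hW x hI ((mem_roots hW0).1 hx)
  simpa [hroots] using card_roots_filter_le_card_wronskian_succ hh2 hW0

end LinearPowProd

end Polynomial

theorem stmt8_general (n : ℕ) (ε : Fin n → ℝ) (hε : ∀ i, ε i = 1 ∨ ε i = -1)
    (k : Fin n → ℝ) (hk : ∀ i, 0 < k i) (a : Fin n → ℕ) (ha : ∀ i, 1 ≤ a i)
    (km : ℝ) (hkm : IsLeast {r | ∃ i, ε i = -1 ∧ k i = r} km)
    (κ : ℝ)
    (h : ℝ[X]) (hh : h = ∏ i, (C (ε i) * X + C (k i)) ^ a i) :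
    ((h - C κ * X).roots.filter (fun y => 0 < y ∧ y < km)).card ≤ 3 := by
  obtain ⟨⟨i₀, hi₀, rfl⟩, hmin⟩ := hkm
  have hl : ∀ i, ∀ x ∈ Ioo 0 (k i₀), 0 < ε i * x + k i := by
    rintro i x ⟨hx0, hx⟩
    rcases hε i with hi | hi
    · rw [hi]; linarith [hk i]
    · have := hmin ⟨i, hi, rfl⟩
      rw [hi]; linarith
  have hh0 : 0 < h.eval 0 := hh ▸ eval_prod_linear_pow_pos fun i => by simpa using hk i
  have hpos : ∀ x ∈ Ioo 0 (k i₀), 0 < h.eval x := fun x hx =>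
    hh ▸ eval_prod_linear_pow_pos fun i => hl i x hx
  have hW₀ : wronskian X (h - C κ * X) = wronskian X h := by
    simp only [wronskian, derivative_sub, derivative_mul, derivative_C, derivative_X]
    ring
  have hP : wronskian (X * h) (wronskian X h) = X ^ 2 * wronskian h (derivative h) + h ^ 2 := by
    simp only [wronskian, derivative_sub, derivative_mul, derivative_X, derivative_one]
    ring
  have hP0 : X ^ 2 * wronskian h (derivative h) + h ^ 2 ≠ 0 := fun h0 => by
    simpa [hh0.ne'] using congrArg (eval 0) h0
  have hW₀0 : wronskian X h ≠ 0 := fun h0 => hP0 (by rw [← hP, h0, wronskian_zero_right])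
  have hcard_f := card_roots_filter_le_card_wronskian_succ (p := h - C κ * X) (q := X)
    (a := 0) (b := k i₀) (fun x hx => by simpa using hx.1.ne') (by rwa [hW₀])
  have hcard_W₀ := card_roots_filter_le_card_wronskian_succ (p := wronskian X h) (q := X * h)
    (a := 0) (b := k i₀) (fun x hx => by simpa using mul_ne_zero hx.1.ne' (hpos x hx).ne')
    (hP ▸ hP0)
  have hcard_P := card_roots_X_sq_mul_wronskian_add_sq_le_one hh (hk i₀) hk hl
    (by rw [hi₀]; norm_num) (Nat.one_le_iff_ne_zero.1 (ha i₀))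
  rw [hW₀] at hcard_f
  rw [hP] at hcard_W₀
  omega

theorem stmt8 (n : ℕ) (ε : Fin n → ℝ) (hε : ∀ i, ε i = 1 ∨ ε i = -1)
    (k : Fin n → ℝ) (hk : ∀ i, 0 < k i) (a : Fin n → ℕ) (ha : ∀ i, 1 ≤ a i)
    (hplus : ∃ i, ε i = 1) (hminus : ∃ i, ε i = -1)
    (km : ℝ) (hkm : IsLeast {r | ∃ i, ε i = -1 ∧ k i = r} km)
    (κ : ℝ) (hκ : 0 < κ)
    (h : ℝ[X]) (hh : h = ∏ i, (C (ε i) * X + C (k i)) ^ a i) :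
    ((h - C κ * X).roots.filter (fun y => 0 < y ∧ y < km)).card ≤ 3 :=
  stmt8_general n ε hε k hk a ha km hkm κ h hh
end

section
/- Let a_+ ≥ 2 and a_- ≥ 1 be integers and set g(y) = (y + k_+)^{a_+} (k_- − y)^{a_-} − κ·y. Then there exist positive reals k_+, k_-, κ with 2k_+ < k_- such that g has exactly three roots in the interval (0, k_-), each of multiplicity one. In particular it suffices to choose k_+, k_- with (k_- − k_+)/(k_- − 2k_+) < (3^{a_+}/2^{1+a_+})^{1/a_-} and 2k_+ < k_-, and then choose κ with 2^{a_+} k_+^{a_+−1}(k_- − k_+)^{a_-} < κ < (3^{a_+}/2)·k_+^{a_+−1}(k_- − 2k_+)^{a_-}. -/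
open Polynomial

/-- The polynomial g(y) = (y + k₊)^{a₊} (k₋ − y)^{a₋} − κ·y. -/
noncomputable def gNine (ap am : ℕ) (kp km κ : ℝ) : ℝ[X] :=
  (X + C kp) ^ ap * (C km - X) ^ am - C κ * X

/-- `p` has exactly three roots in (0, km), each of multiplicity one. -/
def threeSimpleRoots (p : ℝ[X]) (km : ℝ) : Prop :=
  (p.roots.filter (fun y => 0 < y ∧ y < km)).card = 3 ∧
  ∀ y : ℝ, 0 < y → y < km → p.eval y = 0 → p.rootMultiplicity y = 1

/-!
The two bounds on `κ` give `g(0) > 0 > g(k₊)` and `g(2k₊) > 0 > g(k₋)`, hence three distinct roots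
in `(0, k₋)`; the ratio condition is what makes the range of `κ` nonempty. Conversely
`g'' = ((y + k₊)^{a₊} (k₋ − y)^{a₋})''` is, up to a factor without roots in `(−k₊, k₋)`, a
quadratic, so it has at most two roots in `(0, k₋)`. Rolle's theorem, counting multiplicities,
then allows at most four roots of `g` there, and the sign change between `0` and `k₋` makes their
number odd: so it is three, and the three distinct roots are simple.
-/

namespace Polynomial

noncomputable def rootsIoo (p : ℝ[X]) (a b : ℝ) : Multiset ℝ :=
  p.roots.filter fun y => a < y ∧ y < b

theorem mem_rootsIoo {p : ℝ[X]} {a b x : ℝ} (hp : p ≠ 0) :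
    x ∈ rootsIoo p a b ↔ p.IsRoot x ∧ a < x ∧ x < b := by
  rw [rootsIoo, Multiset.mem_filter, mem_roots hp]

theorem count_rootsIoo (p : ℝ[X]) {a b x : ℝ} (hax : a < x) (hxb : x < b) :
    (rootsIoo p a b).count x = p.rootMultiplicity x := by
  rw [rootsIoo, Multiset.count_filter_of_pos (p := fun y => a < y ∧ y < b) ⟨hax, hxb⟩, count_roots]

theorem exists_isRoot_of_eval_mul_eval_neg (p : ℝ[X]) {a b : ℝ} (hab : a ≤ b)
    (h : p.eval a * p.eval b < 0) : ∃ x, a < x ∧ x < b ∧ p.IsRoot x := by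
  rcases mul_neg_iff.1 h with ⟨ha, hb⟩ | ⟨ha, hb⟩
  · obtain ⟨x, hx, hx0⟩ := intermediate_value_Ioo' hab p.continuousOn ⟨hb, ha⟩
    exact ⟨x, hx.1, hx.2, hx0⟩
  · obtain ⟨x, hx, hx0⟩ := intermediate_value_Ioo hab p.continuousOn ⟨ha, hb⟩
    exact ⟨x, hx.1, hx.2, hx0⟩

/-- Splitting off the roots in `(a, b)` leaves a factor without sign change on `[a, b]`, while each
split-off linear factor changes sign there. -/
theorem odd_card_rootsIoo_of_eval_mul_eval_neg (p : ℝ[X]) {a b : ℝ} (hab : a ≤ b)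
    (h : p.eval a * p.eval b < 0) : Odd (Multiset.card (rootsIoo p a b)) := by
  set s := rootsIoo p a b
  have hp : p ≠ 0 := by rintro rfl; simp at h
  obtain ⟨q, hpq⟩ := (Multiset.prod_X_sub_C_dvd_iff_le_roots hp s).2 (Multiset.filter_le _ _)
  have hq_roots : rootsIoo q a b = 0 := by
    have hroots := congrArg (fun r : ℝ[X] => r.roots.filter fun y => a < y ∧ y < b) hpq
    have hs : s.filter (fun y => a < y ∧ y < b) = s :=
      Multiset.filter_eq_self.2 fun _ hx => (Multiset.mem_filter.1 hx).2
    simp only [roots_mul (hpq ▸ hp), roots_multiset_prod_X_sub_C, Multiset.filter_add, hs] at hroots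
    exact left_eq_add.1 hroots
  have heval : p.eval a * p.eval b =
      (-1) ^ Multiset.card s * (s.map fun r => (r - a) * (b - r)).prod * (q.eval a * q.eval b) := by
    rw [← Multiset.card_map (fun r => (r - a) * (b - r)) s, ← Multiset.prod_map_neg,
      Multiset.map_map]
    conv_lhs => rw [hpq]
    simp only [eval_mul, eval_multiset_prod, Multiset.map_map, Function.comp_def, eval_sub, eval_X,
      eval_C]
    rw [show ∀ x y z w : ℝ, x * y * (z * w) = x * z * (y * w) by intros; ring,
      ← Multiset.prod_map_mul]
    congr 3
    ext r
    ring
  by_contra hodd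
  have hpos : 0 < (s.map fun r => (r - a) * (b - r)).prod :=
    Multiset.prod_pos fun x hx => by
      obtain ⟨r, hr, rfl⟩ := Multiset.mem_map.1 hx
      have hr' := (Multiset.mem_filter.1 hr).2
      exact mul_pos (by linarith) (by linarith)
  rw [heval, (Nat.not_odd_iff_even.1 hodd).neg_one_pow, one_mul] at h
  obtain ⟨x, hax, hxb, hx⟩ :=
    q.exists_isRoot_of_eval_mul_eval_neg hab (neg_of_mul_neg_right h hpos.le)
  have hq : q ≠ 0 := by rintro rfl; simp at h
  simpa [hq_roots] using (mem_rootsIoo hq).2 ⟨hx, hax, hxb⟩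

theorem card_toFinset_rootsIoo_le_sdiff_succ (p : ℝ[X]) (a b : ℝ) :
    (rootsIoo p a b).toFinset.card ≤
      ((rootsIoo (derivative p) a b).toFinset \ (rootsIoo p a b).toFinset).card + 1 := by
  rcases eq_or_ne (derivative p) 0 with hp' | hp'
  · rw [eq_C_of_derivative_eq_zero hp']
    simp [rootsIoo]
  have hp : p ≠ 0 := ne_of_apply_ne derivative (by rwa [derivative_zero])
  refine Finset.card_le_sdiff_of_interleaved fun x hx y hy hxy _ => ?_
  rw [Multiset.mem_toFinset, mem_rootsIoo hp] at hx hy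
  obtain ⟨z, hz, hz0⟩ := exists_deriv_eq_zero hxy p.continuousOn (hx.1.trans hy.1.symm)
  refine ⟨z, ?_, hz⟩
  rw [Multiset.mem_toFinset, mem_rootsIoo hp', IsRoot, ← p.deriv]
  exact ⟨hz0, hx.2.1.trans hz.1, hz.2.trans hy.2.2⟩

theorem card_rootsIoo_le_derivative (p : ℝ[X]) (a b : ℝ) :
    Multiset.card (rootsIoo p a b) ≤ Multiset.card (rootsIoo (derivative p) a b) + 1 := by
  set S := rootsIoo p a b
  set S' := rootsIoo (derivative p) a b
  set T := S.toFinset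
  have hcount : ∀ x ∈ T, S.count x ≤ S'.count x + 1 := fun x hx => by
    obtain ⟨hax, hxb⟩ := (Multiset.mem_filter.1 (Multiset.mem_toFinset.1 hx)).2
    rw [count_rootsIoo p hax hxb, count_rootsIoo _ hax hxb]
    have := rootMultiplicity_sub_one_le_derivative_rootMultiplicity p x
    omega
  calc Multiset.card S = ∑ x ∈ T, S.count x := (Multiset.toFinset_sum_count_eq S).symm
    _ ≤ ∑ x ∈ T, S'.count x + T.card := by
      rw [Finset.card_eq_sum_ones, ← Finset.sum_add_distrib]
      exact Finset.sum_le_sum hcount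
    _ ≤ ∑ x ∈ T, S'.count x + ((S'.toFinset \ T).card + 1) := by
      grw [card_toFinset_rootsIoo_le_sdiff_succ]
    _ ≤ ∑ x ∈ T, S'.count x + (∑ x ∈ S'.toFinset \ T, S'.count x + 1) := by
      gcongr
      rw [Finset.card_eq_sum_ones]
      exact Finset.sum_le_sum fun x hx =>
        Multiset.one_le_count_iff_mem.2 (Multiset.mem_toFinset.1 (Finset.mem_sdiff.1 hx).1)
    _ = Multiset.card S' + 1 := by
      rw [← add_assoc, ← Finset.sum_union Finset.disjoint_sdiff, Finset.union_sdiff_self_eq_union,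
        Multiset.sum_count_eq_card fun _ hx =>
          Finset.mem_union_right _ (Multiset.mem_toFinset.2 hx)]

theorem rootsIoo_eq_of_mul_eq {p q u v : ℝ[X]} {a b : ℝ} (h : u * p = v * q) (hup : u * p ≠ 0)
    (hu : ∀ x, a < x → x < b → u.eval x ≠ 0) (hv : ∀ x, a < x → x < b → v.eval x ≠ 0) :
    rootsIoo p a b = rootsIoo q a b := by
  have hroots := congrArg (fun r => rootsIoo r a b) h
  have hnone : ∀ w : ℝ[X], (∀ x, a < x → x < b → w.eval x ≠ 0) → rootsIoo w a b = 0 :=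
    fun w hw => Multiset.filter_eq_nil.2 fun x hx hI => hw x hI.1 hI.2 (mem_roots'.1 hx).2
  simp only [rootsIoo] at hroots hnone
  rwa [roots_mul hup, roots_mul (h ▸ hup), Multiset.filter_add, Multiset.filter_add, hnone u hu,
    hnone v hv, zero_add, zero_add] at hroots

theorem mul_derivative_pow {R : Type*} [CommSemiring R] (p : R[X]) (n : ℕ) :
    p * derivative (p ^ n) = C (n : R) * p ^ n * derivative p := by
  cases n with
  | zero => simp
  | succ n => rw [derivative_pow, Nat.add_sub_cancel, pow_succ]; ring

end Polynomial

section

variable (kp km : ℝ) (ap am : ℕ)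

theorem mul_derivative_pow_mul_pow :
    (X + C kp) * (C km - X) * derivative ((X + C kp) ^ ap * (C km - X) ^ am) =
      (X + C kp) ^ ap * (C km - X) ^ am * (C (ap : ℝ) * (C km - X) - C (am : ℝ) * (X + C kp)) := by
  have hp := mul_derivative_pow (X + C kp) ap
  have hm := mul_derivative_pow (C km - X) am
  simp only [derivative_add, derivative_sub, derivative_X, derivative_C] at hp hm
  rw [derivative_mul]
  linear_combination (C km - X) * (C km - X) ^ am * hp + (X + C kp) * (X + C kp) ^ ap * hm

theorem mul_derivative_derivative_pow_mul_pow :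
    (X + C kp) ^ 2 * (C km - X) ^ 2 * derivative (derivative ((X + C kp) ^ ap * (C km - X) ^ am)) =
      (X + C kp) ^ ap * (C km - X) ^ am *
        (C (ap : ℝ) * (C (ap : ℝ) - 1) * (C km - X) ^ 2
          - 2 * C (ap : ℝ) * C (am : ℝ) * ((X + C kp) * (C km - X))
          + C (am : ℝ) * (C (am : ℝ) - 1) * (X + C kp) ^ 2) := by
  have h := mul_derivative_pow_mul_pow kp km ap am
  generalize (X + C kp) ^ ap * (C km - X) ^ am = H at h ⊢
  have h' := congrArg derivative h
  simp only [derivative_mul, derivative_add, derivative_sub, derivative_X, derivative_C] at h'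
  linear_combination ((X + C kp) * (C km - X)) * h' +
    (C (ap : ℝ) * (C km - X) - C (am : ℝ) * (X + C kp) - (C km - X) + (X + C kp)) * h

theorem card_rootsIoo_derivative_derivative_pow_mul_pow_le_two {a b : ℝ} (ha : -kp ≤ a)
    (hb : b ≤ km) :
    Multiset.card
      (rootsIoo (derivative (derivative ((X + C kp) ^ ap * (C km - X) ^ am))) a b) ≤ 2 := by
  rcases eq_or_ne (derivative (derivative ((X + C kp) ^ ap * (C km - X) ^ am))) 0 with h0 | h0
  · rw [h0]; simp [rootsIoo]
  have hne : ∀ n m : ℕ, ∀ x, a < x → x < b → ((X + C kp) ^ n * (C km - X) ^ m).eval x ≠ 0 :=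
    fun n m x hax hxb => by
      have : 0 < x + kp := by linarith
      have : 0 < km - x := by linarith
      simp only [eval_mul, eval_pow, eval_add, eval_sub, eval_X, eval_C]
      positivity
  have hu : ((X + C kp) ^ 2 * (C km - X) ^ 2 : ℝ[X]) ≠ 0 := by
    rw [← neg_sub]
    exact mul_ne_zero (pow_ne_zero _ (X_add_C_ne_zero kp))
      (pow_ne_zero _ (neg_ne_zero.2 (X_sub_C_ne_zero km)))
  rw [rootsIoo_eq_of_mul_eq (mul_derivative_derivative_pow_mul_pow kp km ap am) (mul_ne_zero hu h0)
    (hne 2 2) (hne ap am)]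
  refine (Multiset.card_le_card (Multiset.filter_le _ _)).trans ((card_roots' _).trans ?_)
  compute_degree

end

theorem threeSimpleRoots_of_sign_changes {p : ℝ[X]} {km x₁ x₂ : ℝ} (h₁ : 0 < x₁) (h₁₂ : x₁ < x₂)
    (h₂ : x₂ < km) (hp'' : Multiset.card (rootsIoo (derivative (derivative p)) 0 km) ≤ 2)
    (h0 : 0 < p.eval 0) (hx₁ : p.eval x₁ < 0) (hx₂ : 0 < p.eval x₂) (hkm : p.eval km < 0) :
    threeSimpleRoots p km := by
  have hp : p ≠ 0 := by rintro rfl; simp at h0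
  obtain ⟨r₁, h0r₁, hr₁, hr₁0⟩ :=
    p.exists_isRoot_of_eval_mul_eval_neg h₁.le (mul_neg_of_pos_of_neg h0 hx₁)
  obtain ⟨r₂, hr₂, hr₂', hr₂0⟩ :=
    p.exists_isRoot_of_eval_mul_eval_neg h₁₂.le (mul_neg_of_neg_of_pos hx₁ hx₂)
  obtain ⟨r₃, hr₃, hr₃', hr₃0⟩ :=
    p.exists_isRoot_of_eval_mul_eval_neg h₂.le (mul_neg_of_pos_of_neg hx₂ hkm)
  have hdistinct : 3 ≤ (rootsIoo p 0 km).toFinset.card := by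
    have hsub : ({r₁, r₂, r₃} : Finset ℝ) ⊆ (rootsIoo p 0 km).toFinset := by
      simp only [Finset.insert_subset_iff, Finset.singleton_subset_iff, Multiset.mem_toFinset,
        mem_rootsIoo hp]
      refine ⟨⟨hr₁0, ?_, ?_⟩, ⟨hr₂0, ?_, ?_⟩, ⟨hr₃0, ?_, ?_⟩⟩ <;> linarith
    calc 3 = ({r₁, r₂, r₃} : Finset ℝ).card :=
          (Finset.card_eq_three.2 ⟨r₁, r₂, r₃, by linarith, by linarith, by linarith, rfl⟩).symm
      _ ≤ _ := Finset.card_le_card hsub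
  have hle : Multiset.card (rootsIoo p 0 km) ≤ 4 := by
    have := card_rootsIoo_le_derivative p 0 km
    have := card_rootsIoo_le_derivative (derivative p) 0 km
    omega
  obtain ⟨k, hk⟩ := p.odd_card_rootsIoo_of_eval_mul_eval_neg (by linarith)
    (mul_neg_of_pos_of_neg h0 hkm)
  have hfin := Multiset.toFinset_card_le (rootsIoo p 0 km)
  have hnodup : (rootsIoo p 0 km).Nodup := Multiset.toFinset_card_eq_card_iff_nodup.1 (by omega)
  refine ⟨show Multiset.card (rootsIoo p 0 km) = 3 by omega, fun y hy0 hykm hy => ?_⟩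
  rw [← count_rootsIoo p hy0 hykm]
  exact Multiset.count_eq_one_of_mem hnodup ((mem_rootsIoo hp).2 ⟨hy, hy0, hykm⟩)

section

variable {ap am : ℕ} {kp km κ : ℝ}

theorem eval_gNine (y : ℝ) :
    (gNine ap am kp km κ).eval y = (y + kp) ^ ap * (km - y) ^ am - κ * y := by
  simp [gNine]

theorem derivative_derivative_gNine :
    derivative (derivative (gNine ap am kp km κ)) =
      derivative (derivative ((X + C kp) ^ ap * (C km - X) ^ am)) := by
  simp [gNine]

theorem threeSimpleRoots_gNine (hap : ap ≠ 0) (ham : am ≠ 0) (hkp : 0 < kp) (h2k : 2 * kp < km)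
    (hlo : 2 ^ ap * kp ^ (ap - 1) * (km - kp) ^ am < κ)
    (hhi : κ < 3 ^ ap / 2 * kp ^ (ap - 1) * (km - 2 * kp) ^ am) :
    threeSimpleRoots (gNine ap am kp km κ) km := by
  have hκ : 0 < κ := by
    have : 0 < km - kp := by linarith
    exact lt_of_le_of_lt (by positivity) hlo
  refine threeSimpleRoots_of_sign_changes hkp (by linarith : kp < 2 * kp) h2k ?_ ?_ ?_ ?_ ?_
  · rw [derivative_derivative_gNine]
    exact card_rootsIoo_derivative_derivative_pow_mul_pow_le_two kp km ap am (by linarith) le_rfl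
  · have : 0 < km := by linarith
    rw [eval_gNine, zero_add, sub_zero, mul_zero, sub_zero]
    positivity
  · have : (kp + kp) ^ ap * (km - kp) ^ am - κ * kp
        = kp * (2 ^ ap * kp ^ (ap - 1) * (km - kp) ^ am - κ) := by
      rw [← two_mul, mul_pow, ← pow_sub_one_mul hap kp]; ring
    rw [eval_gNine, this]
    exact mul_neg_of_pos_of_neg hkp (by linarith)
  · have : (2 * kp + kp) ^ ap * (km - 2 * kp) ^ am - κ * (2 * kp)
        = 2 * kp * (3 ^ ap / 2 * kp ^ (ap - 1) * (km - 2 * kp) ^ am - κ) := by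
      rw [show 2 * kp + kp = 3 * kp by ring, mul_pow, ← pow_sub_one_mul hap kp]; ring
    rw [eval_gNine, this]
    exact mul_pos (by linarith) (by linarith)
  · rw [eval_gNine, sub_self, zero_pow ham, mul_zero, zero_sub, neg_neg_iff_pos]
    exact mul_pos hκ (by linarith)

end

theorem two_pow_succ_lt_three_pow {n : ℕ} (hn : 2 ≤ n) : 2 ^ (1 + n) < 3 ^ n := by
  induction n, hn using Nat.le_induction with
  | base => norm_num
  | succ n _ ih => rw [Nat.add_succ, pow_succ, pow_succ]; omega

theorem exists_div_sub_two_mul_lt {R kp : ℝ} (hR : 1 < R) (hkp : 0 < kp) :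
    ∃ km, 2 * kp < km ∧ (km - kp) / (km - 2 * kp) < R := by
  have hR' : 0 < R - 1 := by linarith
  -- for this `km` the ratio equals `(R + 1) / 2`
  refine ⟨2 * kp + 2 * kp / (R - 1), by have := div_pos (mul_pos two_pos hkp) hR'; linarith, ?_⟩
  rw [add_sub_cancel_left, div_lt_iff₀ (by positivity)]
  field_simp
  nlinarith

theorem two_pow_mul_lt_three_pow_div_two_mul {ap am : ℕ} {kp km : ℝ} (ham : am ≠ 0)
    (hkp : 0 < kp) (h2k : 2 * kp < km)
    (hratio : (km - kp) / (km - 2 * kp) < ((3 : ℝ) ^ ap / 2 ^ (1 + ap)) ^ ((am : ℝ)⁻¹)) :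
    2 ^ ap * kp ^ (ap - 1) * (km - kp) ^ am < 3 ^ ap / 2 * kp ^ (ap - 1) * (km - 2 * kp) ^ am := by
  have hd : 0 < km - 2 * kp := by linarith
  have hpow : (km - kp) ^ am < 3 ^ ap / 2 ^ (1 + ap) * (km - 2 * kp) ^ am := by
    have := pow_lt_pow_left₀ hratio (div_nonneg (by linarith) hd.le) ham
    rwa [Real.rpow_inv_natCast_pow (by positivity) ham, div_pow,
      div_lt_iff₀ (by positivity)] at this
  calc 2 ^ ap * kp ^ (ap - 1) * (km - kp) ^ am
      < 2 ^ ap * kp ^ (ap - 1) * (3 ^ ap / 2 ^ (1 + ap) * (km - 2 * kp) ^ am) := by gcongr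
    _ = 3 ^ ap / 2 * kp ^ (ap - 1) * (km - 2 * kp) ^ am := by
      rw [pow_add]
      field_simp

theorem stmt9 (ap am : ℕ) (hap : 2 ≤ ap) (ham : 1 ≤ am) :
    (∃ kp km κ : ℝ, 0 < kp ∧ 0 < km ∧ 0 < κ ∧ 2 * kp < km ∧
      threeSimpleRoots (gNine ap am kp km κ) km) ∧
    (∀ kp km κ : ℝ, 0 < kp → 0 < km → 0 < κ → 2 * kp < km →
      (km - kp) / (km - 2 * kp) < ((3 : ℝ) ^ ap / 2 ^ (1 + ap)) ^ ((am : ℝ)⁻¹) →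
      2 ^ ap * kp ^ (ap - 1) * (km - kp) ^ am < κ →
      κ < 3 ^ ap / 2 * kp ^ (ap - 1) * (km - 2 * kp) ^ am →
      threeSimpleRoots (gNine ap am kp km κ) km) := by
  have hap' : ap ≠ 0 := by omega
  have ham' : am ≠ 0 := by omega
  refine ⟨?_, fun kp km κ hkp _ _ h2k _ hlo hhi => threeSimpleRoots_gNine hap' ham' hkp h2k hlo hhi⟩
  have hc : 1 < (3 : ℝ) ^ ap / 2 ^ (1 + ap) := by
    rw [one_lt_div (by positivity)]
    exact_mod_cast two_pow_succ_lt_three_pow hap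
  obtain ⟨km, h2k, hratio⟩ :=
    exists_div_sub_two_mul_lt (Real.one_lt_rpow hc (by positivity : (0 : ℝ) < (am : ℝ)⁻¹)) one_pos
  have hlt := two_pow_mul_lt_three_pow_div_two_mul ham' one_pos h2k hratio
  have hlo : 0 < 2 ^ ap * (1 : ℝ) ^ (ap - 1) * (km - 1) ^ am := by
    have : 0 < km - 1 := by linarith
    positivity
  exact ⟨1, km, _, one_pos, by linarith, by linarith, h2k,
    threeSimpleRoots_gNine hap' ham' one_pos h2k (left_lt_add_div_two.2 hlt)
      (add_div_two_lt_right.2 hlt)⟩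
end

section
/- Consider the planar ODE system dx_1/dt = α_1 x_1^{a_1} x_2^{a_2} − c_1 x_1 + k_1, dx_2/dt = −α_2 x_1^{a_1} x_2^{a_2} − c_2 x_2 + k_2, with α_1, α_2, c_1, c_2, k_1, k_2 > 0 and a_1, a_2 positive integers. At any positive steady state (x_1, x_2), the determinant of the Jacobian J equals −c_2·f'(x_1), where f(x_1) = α_1 x_1^{a_1}·((−α_2 c_1 x_1 + α_1 k_2 + α_2 k_1)/(α_1 c_2))^{a_2} − c_1 x_1 + k_1 is obtained by eliminating x_2 via the steady-state relation x_2 = (−α_2 c_1 x_1 + α_1 k_2 + α_2 k_1)/(α_1 c_2). -/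
theorem stmt12 (a1 a2 : ℕ) (ha1 : 1 ≤ a1) (ha2 : 1 ≤ a2)
    (α1 α2 c1 c2 k1 k2 : ℝ)
    (hα1 : 0 < α1) (hα2 : 0 < α2) (hc1 : 0 < c1) (hc2 : 0 < c2)
    (hk1 : 0 < k1) (hk2 : 0 < k2)
    (x1 x2 : ℝ) (hx1 : 0 < x1) (hx2 : 0 < x2)
    (hss1 : α1 * x1 ^ a1 * x2 ^ a2 - c1 * x1 + k1 = 0)
    (hss2 : -α2 * x1 ^ a1 * x2 ^ a2 - c2 * x2 + k2 = 0)
    (f : ℝ → ℝ)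
    (hf : f = fun x =>
      α1 * x ^ a1 * ((-α2 * c1 * x + α1 * k2 + α2 * k1) / (α1 * c2)) ^ a2
        - c1 * x + k1)
    (detJ : ℝ)
    (hdet : detJ = -(x1 ^ (a1 - 1) * x2 ^ (a2 - 1)) *
        ((a1 : ℝ) * α1 * c2 * x2 - (a2 : ℝ) * α2 * c1 * x1) + c1 * c2) :
    deriv f x1 = -detJ / c2 := by
  have hα1' := hα1.ne'
  have hc2' := hc2.ne'
  -- steady state gives x2 = linear expression
  have hx2eq : (-α2 * c1 * x1 + α1 * k2 + α2 * k1) / (α1 * c2) = x2 := by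
    rw [div_eq_iff (by positivity)]
    linear_combination α2 * hss1 + α1 * hss2
  obtain ⟨b1, rfl⟩ : ∃ b, a1 = b + 1 := ⟨a1 - 1, (Nat.succ_pred_eq_of_pos ha1).symm⟩
  obtain ⟨b2, rfl⟩ : ∃ b, a2 = b + 1 := ⟨a2 - 1, (Nat.succ_pred_eq_of_pos ha2).symm⟩
  have hlin : HasDerivAt (fun x : ℝ => -α2 * c1 * x + α1 * k2 + α2 * k1)
      (-α2 * c1) x1 := by
    simpa using ((((hasDerivAt_id x1).const_mul (-α2 * c1)).add_const (α1 * k2)).add_const (α2 * k1))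
  have hg : HasDerivAt
      (fun x : ℝ => (-α2 * c1 * x + α1 * k2 + α2 * k1) / (α1 * c2))
      (-α2 * c1 / (α1 * c2)) x1 := hlin.div_const _
  have hgp := hg.pow (b2 + 1)
  have hxp : HasDerivAt (fun x : ℝ => α1 * x ^ (b1 + 1))
      (α1 * ((b1 + 1 : ℕ) * x1 ^ b1)) x1 := by
    simpa using (hasDerivAt_pow (b1 + 1) x1).const_mul α1
  have hF : HasDerivAt f
      (α1 * ((b1 + 1 : ℕ) * x1 ^ b1) *
          ((-α2 * c1 * x1 + α1 * k2 + α2 * k1) / (α1 * c2)) ^ (b2 + 1)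
        + α1 * x1 ^ (b1 + 1) *
          ((b2 + 1 : ℕ) *
            ((-α2 * c1 * x1 + α1 * k2 + α2 * k1) / (α1 * c2)) ^ (b2 + 1 - 1) *
            (-α2 * c1 / (α1 * c2)))
        - c1 * 1) x1 := by
    rw [hf]
    exact ((hxp.mul hgp).sub ((hasDerivAt_id x1).const_mul c1)).add_const k1
  rw [hF.deriv, hdet, hx2eq]
  simp only [Nat.add_sub_cancel, Nat.cast_add, Nat.cast_one]
  field_simp
  ring
end

section
/- With the planar system of the previous statement, suppose (x_1, x_2) is a positive steady state at which det(J(x)) > 0 and c_1 < c_2. Then tr(J(x)) < 0, so the steady state is asymptotically stable (positive determinant and negative trace of the 2×2 Jacobian). -/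
theorem stmt13 (a1 a2 : ℕ) (ha1 : 1 ≤ a1) (ha2 : 1 ≤ a2)
    (α1 α2 c1 c2 k1 k2 : ℝ)
    (hα1 : 0 < α1) (hα2 : 0 < α2) (hc1 : 0 < c1) (hc2 : 0 < c2)
    (hk1 : 0 < k1) (hk2 : 0 < k2)
    (x1 x2 : ℝ) (hx1 : 0 < x1) (hx2 : 0 < x2)
    (hss1 : α1 * x1 ^ a1 * x2 ^ a2 - c1 * x1 + k1 = 0)
    (hss2 : -α2 * x1 ^ a1 * x2 ^ a2 - c2 * x2 + k2 = 0)
    (detJ trJ : ℝ)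
    (hdet : detJ = -(x1 ^ (a1 - 1) * x2 ^ (a2 - 1)) *
        ((a1 : ℝ) * α1 * c2 * x2 - (a2 : ℝ) * α2 * c1 * x1) + c1 * c2)
    (htr : trJ = x1 ^ (a1 - 1) * x2 ^ (a2 - 1) *
        ((a1 : ℝ) * α1 * x2 - (a2 : ℝ) * α2 * x1) - c1 - c2)
    (hdetpos : 0 < detJ) (hc12 : c1 < c2) :
    trJ < 0 := by
  have hP : 0 < x1 ^ (a1 - 1) * x2 ^ (a2 - 1) := by positivity
  have ha2' : (1 : ℝ) ≤ (a2 : ℝ) := by exact_mod_cast ha2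
  nlinarith [mul_pos hP (mul_pos (mul_pos hα2 hx1) (sub_pos.mpr hc12)),
    mul_pos hP (mul_pos hα2 hx1),
    mul_le_mul_of_nonneg_left ha2' (le_of_lt (mul_pos hP (mul_pos (mul_pos hα2 hx1) (sub_pos.mpr hc12))))]
end

section
/- Consider the planar ODE system dx_1/dt = α_1 ℓ_1 x_1 x_2 − α_1 ℓ_2 x_1^{b_1} x_2^{b_2} − c_1 x_1 + k_1, dx_2/dt = α_2 ℓ_1 x_1 x_2 − α_2 ℓ_2 x_1^{b_1} x_2^{b_2} − c_2 x_2 + k_2, with all of ℓ_1, ℓ_2, c_1, c_2, k_1, k_2 > 0, α_i = b_i − 1 > 0, and integers b_1, b_2 ≥ 2. Then at any positive steady state (x_1, x_2), the trace of the Jacobian satisfies x_1 x_2 · tr(J(x)) = −k_1 x_2 + (1 − b_1) α_1 ℓ_2 x_1^{b_1} x_2^{b_2+1} − k_2 x_1 + (1 − b_2) α_2 ℓ_2 x_1^{b_1+1} x_2^{b_2} < 0; in particular tr(J(x)) < 0. -/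
theorem stmt18 (b1 b2 : ℕ) (hb1 : 2 ≤ b1) (hb2 : 2 ≤ b2)
    (l1 l2 c1 c2 k1 k2 α1 α2 : ℝ)
    (hl1 : 0 < l1) (hl2 : 0 < l2) (hc1 : 0 < c1) (hc2 : 0 < c2)
    (hk1 : 0 < k1) (hk2 : 0 < k2)
    (hα1 : α1 = (b1 : ℝ) - 1) (hα2 : α2 = (b2 : ℝ) - 1)
    (x1 x2 : ℝ) (hx1 : 0 < x1) (hx2 : 0 < x2)
    (hss1 : α1 * l1 * x1 * x2 - α1 * l2 * x1 ^ b1 * x2 ^ b2 - c1 * x1 + k1 = 0)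
    (hss2 : α2 * l1 * x1 * x2 - α2 * l2 * x1 ^ b1 * x2 ^ b2 - c2 * x2 + k2 = 0)
    (trJ : ℝ)
    (htr : trJ = (α1 * l1 * x2 - (b1 : ℝ) * α1 * l2 * x1 ^ (b1 - 1) * x2 ^ b2 - c1)
        + (α2 * l1 * x1 - (b2 : ℝ) * α2 * l2 * x1 ^ b1 * x2 ^ (b2 - 1) - c2)) :
    x1 * x2 * trJ = -k1 * x2 + (1 - (b1 : ℝ)) * α1 * l2 * x1 ^ b1 * x2 ^ (b2 + 1)
        - k2 * x1 + (1 - (b2 : ℝ)) * α2 * l2 * x1 ^ (b1 + 1) * x2 ^ b2 ∧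
    x1 * x2 * trJ < 0 ∧ trJ < 0 := by
  have e1 : x1 ^ (b1 - 1) * x1 = x1 ^ b1 := by
    rw [← pow_succ]; congr 1; omega
  have e2 : x2 ^ (b2 - 1) * x2 = x2 ^ b2 := by
    rw [← pow_succ]; congr 1; omega
  have key : x1 * x2 * trJ = -k1 * x2 + (1 - (b1 : ℝ)) * α1 * l2 * x1 ^ b1 * x2 ^ (b2 + 1)
      - k2 * x1 + (1 - (b2 : ℝ)) * α2 * l2 * x1 ^ (b1 + 1) * x2 ^ b2 := by
    subst htr
    linear_combination x2 * hss1 + x1 * hss2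
      - ((b1 : ℝ) * α1 * l2 * x2 ^ b2 * x2) * e1
      - ((b2 : ℝ) * α2 * l2 * x1 ^ b1 * x1) * e2
  have hα1' : (1 : ℝ) ≤ α1 := by
    rw [hα1]; have : (2:ℝ) ≤ (b1 : ℝ) := by exact_mod_cast hb1
    linarith
  have hα2' : (1 : ℝ) ≤ α2 := by
    rw [hα2]; have : (2:ℝ) ≤ (b2 : ℝ) := by exact_mod_cast hb2
    linarith
  have hb1' : (2:ℝ) ≤ (b1 : ℝ) := by exact_mod_cast hb1
  have hb2' : (2:ℝ) ≤ (b2 : ℝ) := by exact_mod_cast hb2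
  have p1 : 0 < x1 ^ b1 * x2 ^ (b2 + 1) := by positivity
  have p2 : 0 < x1 ^ (b1 + 1) * x2 ^ b2 := by positivity
  have hneg : x1 * x2 * trJ < 0 := by
    rw [key]
    nlinarith [mul_pos hk1 hx2, mul_pos hk2 hx1,
      mul_pos (mul_pos (mul_pos (by linarith : (0:ℝ) < (b1:ℝ) - 1) (by linarith : (0:ℝ) < α1)) hl2) p1,
      mul_pos (mul_pos (mul_pos (by linarith : (0:ℝ) < (b2:ℝ) - 1) (by linarith : (0:ℝ) < α2)) hl2) p2]
  refine ⟨key, hneg, ?_⟩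
  have hx12 : 0 < x1 * x2 := mul_pos hx1 hx2
  nlinarith [mul_pos hx12 hx12]
end

section
/- Let W ∈ ℤ^{n×(n+2)} be a matrix of full rank n whose last column is zero, let C ∈ ℝ^{n×(n+2)} have full rank n, and consider the system C·x^W = 0 in variables x ∈ ℝ_{>0}^n, where x^W denotes the column vector of monomials (x^{w^{(1)}}, ..., x^{w^{(n+1)}}, 1). Let Q ∈ ℤ^{(n+2)×2} be a Gale dual of W with last column (0,...,0,1)ᵀ, and D ∈ ℝ^{(n+2)×2} a Gale dual of C with last row (0,1). Then the map x ↦ y determined by x^W = D·(y,1)ᵀ is a bijection between { x ∈ ℝ_{>0}^n : C·x^W = 0 } and { y ∈ ℝ : ∏_{i=1}^{n+1} d_i(y)^{q_{i,1}} = 1 and d_i(y) > 0 for all i }, where d_i(y) = d_{i,1}·y + d_{i,2} is the i-th entry of D·(y,1)ᵀ. -/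
/-!
Taking logarithms turns `x ↦ x^W` on the positive orthant into the linear map `u ↦ u ᵥ* W`,
which is injective since `W` has full rank. As `W * Q = 0` and the columns of `Q` are
independent, a dimension count shows that its image is the kernel of `v ↦ v ᵥ* Q`: a positive
`z` is `x^W` for a unique positive `x` iff `z^Q = 1`. If moreover `C x^W = 0`, then `x^W` lies in
`ker C = im D`, and since its last coordinate is `1` it equals `D (y, 1)` for a unique `y`.
Of the two conditions `z^Q = 1`, the second just says that this last coordinate is `1`.
-/

open Matrix Function

theorem Equiv.exists_apply_eq_of_range_eq {α β γ : Type*} {f : α → γ} {g : β → γ}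
    (hf : Injective f) (hg : Injective g) (h : Set.range f = Set.range g) :
    ∃ e : α ≃ β, ∀ a, f a = g (e a) :=
  ⟨(Equiv.ofInjective f hf).trans ((Equiv.setCongr h).trans (Equiv.ofInjective g hg).symm),
    fun a => by simp [Equiv.apply_ofInjective_symm]⟩

theorem Fin.univ_filter_val_lt_eq_erase_last (n : ℕ) :
    Finset.univ.filter (fun i : Fin (n + 1) => (i : ℕ) < n) = Finset.univ.erase (Fin.last n) := by
  ext i
  simp only [Finset.mem_filter, Finset.mem_univ, true_and, Finset.mem_erase, ne_eq, Fin.ext_iff,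
    Fin.val_last, and_true]
  omega

theorem LinearMap.range_eq_ker_of_finrank_add_eq {K V U X : Type*} [Field K]
    [AddCommGroup V] [Module K V] [FiniteDimensional K V]
    [AddCommGroup U] [Module K U] [FiniteDimensional K U]
    [AddCommGroup X] [Module K X] [FiniteDimensional K X]
    {f : V →ₗ[K] U} {g : U →ₗ[K] X} (hf : Injective f) (hg : Surjective g) (hgf : g ∘ₗ f = 0)
    (hdim : Module.finrank K V + Module.finrank K X = Module.finrank K U) :
    LinearMap.range f = LinearMap.ker g := by
  refine Submodule.eq_of_le_of_finrank_le (LinearMap.range_le_ker_iff.2 hgf) ?_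
  have := g.finrank_range_add_finrank_ker
  rw [LinearMap.range_eq_top.2 hg, finrank_top] at this
  rw [LinearMap.finrank_range_of_inj hf]
  omega

theorem Matrix.range_vecMulLinear_eq_ker {K m ι κ : Type*} [Field K] [Fintype m] [Fintype ι]
    [Fintype κ] {A : Matrix m ι K} {B : Matrix ι κ K} (hAB : A * B = 0) (hA : Injective A.vecMul)
    (hB : Surjective B.vecMul) (hdim : Fintype.card m + Fintype.card κ = Fintype.card ι) :
    LinearMap.range A.vecMulLinear = LinearMap.ker B.vecMulLinear :=
  LinearMap.range_eq_ker_of_finrank_add_eq hA hB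
    (LinearMap.ext fun u => by simp [vecMul_vecMul, hAB]) (by simpa using hdim)

section Monomials

variable {m ι κ : Type*} [Fintype m]

/-- `W.monomials x` is the vector of monomials `x^W`, with exponents the columns of `W`. -/
noncomputable def Matrix.monomials (W : Matrix m ι ℤ) (x : m → ℝ) : ι → ℝ :=
  fun j => ∏ i, x i ^ W i j

theorem Matrix.monomials_eq_exp_vecMul (W : Matrix m ι ℤ) {x : m → ℝ} (hx : ∀ i, 0 < x i) :
    W.monomials x = Real.exp ∘ ((Real.log ∘ x) ᵥ* W.map (↑)) := by
  funext j
  show ∏ i, x i ^ W i j = Real.exp (∑ i, Real.log (x i) * W i j)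
  rw [Real.exp_sum]
  refine Finset.prod_congr rfl fun i _ => ?_
  rw [← Real.rpow_intCast, Real.rpow_def_of_pos (hx i)]

theorem Matrix.monomials_pos (W : Matrix m ι ℤ) {x : m → ℝ} (hx : ∀ i, 0 < x i) (j : ι) :
    0 < W.monomials x j :=
  Finset.prod_pos fun i _ => zpow_pos (hx i) _

theorem Matrix.monomials_injOn {W : Matrix m ι ℤ}
    (hW : Injective (W.map (Int.cast : ℤ → ℝ)).vecMul) :
    Set.InjOn W.monomials {x | ∀ i, 0 < x i} := by
  intro x hx x' hx' h
  rw [W.monomials_eq_exp_vecMul hx, W.monomials_eq_exp_vecMul hx'] at h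
  have hlog := hW (Real.exp_injective.comp_left h)
  funext i
  exact Real.log_injOn_pos (hx i) (hx' i) (congrFun hlog i)

theorem Matrix.exists_monomials_eq_iff [Fintype ι] [Fintype κ] {W : Matrix m ι ℤ}
    {Q : Matrix ι κ ℤ}
    (hrange : LinearMap.range (W.map (Int.cast : ℤ → ℝ)).vecMulLinear =
      LinearMap.ker (Q.map (Int.cast : ℤ → ℝ)).vecMulLinear)
    {z : ι → ℝ} (hz : ∀ j, 0 < z j) :
    (∃ x, (∀ i, 0 < x i) ∧ W.monomials x = z) ↔ Q.monomials z = 1 := by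
  have hlog : Q.monomials z = 1 ↔ Real.log ∘ z ∈ LinearMap.range (W.map (↑)).vecMulLinear := by
    rw [hrange, LinearMap.mem_ker, vecMulLinear_apply, Q.monomials_eq_exp_vecMul hz, funext_iff,
      funext_iff]
    simp
  rw [hlog]
  constructor
  · rintro ⟨x, hx, rfl⟩
    refine ⟨Real.log ∘ x, ?_⟩
    rw [vecMulLinear_apply, W.monomials_eq_exp_vecMul hx]
    funext j
    simp
  · rintro ⟨u, hu⟩
    refine ⟨Real.exp ∘ u, fun i => Real.exp_pos _, ?_⟩
    rw [W.monomials_eq_exp_vecMul (x := Real.exp ∘ u) fun i => Real.exp_pos _]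
    rw [vecMulLinear_apply] at hu
    funext j
    simp [Function.comp_def, hu, Real.exp_log (hz j)]

theorem Matrix.monomials_eq_one_iff_prod_erase [Fintype ι] [DecidableEq ι]
    {Q : Matrix ι (Fin 2) ℤ} {a : ι} (hQ1 : ∀ i, Q i 1 = if i = a then 1 else 0)
    {z : ι → ℝ} (hza : z a = 1) :
    Q.monomials z = 1 ↔ ∏ i ∈ Finset.univ.erase a, z i ^ Q i 0 = 1 := by
  simp only [funext_iff, Fin.forall_fin_two, monomials, Pi.one_apply, hQ1,
    ← Finset.prod_erase_mul _ _ (Finset.mem_univ a), hza]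
  simp

end Monomials

theorem Matrix.vecMul_map_intCast_surjective {ι : Type*} [Fintype ι] [DecidableEq ι]
    {Q : Matrix ι (Fin 2) ℤ} {a : ι} (hQinj : ∀ t : Fin 2 → ℤ, Q *ᵥ t = 0 → t = 0)
    (hQ1 : ∀ i, Q i 1 = if i = a then 1 else 0) :
    Surjective (Q.map (Int.cast : ℤ → ℝ)).vecMul := by
  obtain ⟨b, hba, hb⟩ : ∃ b, b ≠ a ∧ Q b 0 ≠ 0 := by
    by_contra! h
    have hker : Q *ᵥ ![1, -Q a 0] = 0 := by
      funext i
      by_cases hi : i = a <;> simp [hi, h i, mulVec, dotProduct, Fin.sum_univ_two, hQ1]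
    simpa using congrFun (hQinj _ hker) 0
  intro c
  refine ⟨Pi.single b ((c 0 - Q a 0 * c 1) / Q b 0) + Pi.single a (c 1), ?_⟩
  have hb' : (Q b 0 : ℝ) ≠ 0 := Int.cast_ne_zero.2 hb
  funext k
  fin_cases k
  · simp only [Fin.isValue, Fin.zero_eta, add_vecMul, single_vecMul, Pi.add_apply, Pi.smul_apply,
      row_apply, map_apply, smul_eq_mul]
    field_simp
    ring
  · simp [add_vecMul, single_vecMul, hQ1, hba]

section AffineLine

variable {m ι R : Type*} [CommRing R]

@[simp]
theorem Matrix.mulVec_cons_one_apply (D : Matrix ι (Fin 2) R) (y : R) (i : ι) :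
    (D *ᵥ ![y, 1]) i = D i 0 * y + D i 1 := by
  simp [mulVec, dotProduct, Fin.sum_univ_two]

theorem Matrix.mulVec_cons_one_injective {D : Matrix ι (Fin 2) R}
    (hD : ∀ t : Fin 2 → R, D *ᵥ t = 0 → t = 0) : Injective fun y : R => D *ᵥ ![y, 1] := by
  intro y y' h
  have := congrFun (hD _ (by rw [mulVec_sub]; exact sub_eq_zero.2 h)) 0
  simpa [sub_eq_zero] using this

theorem Matrix.mulVec_eq_zero_iff_exists_eq_mulVec_cons_one [Fintype ι]
    {C : Matrix m ι R} {D : Matrix ι (Fin 2) R}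
    (hCD : ∀ v, C *ᵥ v = 0 ↔ ∃ t, v = D *ᵥ t) {a : ι} (hDa0 : D a 0 = 0) (hDa1 : D a 1 = 1)
    {v : ι → R} (hva : v a = 1) :
    C *ᵥ v = 0 ↔ ∃ y, v = D *ᵥ ![y, 1] := by
  rw [hCD]
  constructor
  · rintro ⟨t, rfl⟩
    have ht1 : t 1 = 1 := by simpa [mulVec, dotProduct, Fin.sum_univ_two, hDa0, hDa1] using hva
    refine ⟨t 0, congrArg _ ?_⟩
    funext k
    fin_cases k <;> simp [ht1]
  · rintro ⟨y, rfl⟩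
    exact ⟨_, rfl⟩

end AffineLine

theorem Matrix.exists_monomials_eq_iff_of_mulVec_eq_zero {m n ι κ : Type*} [Fintype m]
    [Fintype ι] [Fintype κ] {W : Matrix m ι ℤ} {Q : Matrix ι κ ℤ} (C : Matrix n ι ℝ)
    (hrange : LinearMap.range (W.map (Int.cast : ℤ → ℝ)).vecMulLinear =
      LinearMap.ker (Q.map (Int.cast : ℤ → ℝ)).vecMulLinear)
    {a : ι} (hWa : ∀ i, W i a = 0) (z : ι → ℝ) :
    (∃ x, ((∀ i, 0 < x i) ∧ C *ᵥ W.monomials x = 0) ∧ W.monomials x = z) ↔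
      (∀ j, 0 < z j) ∧ z a = 1 ∧ Q.monomials z = 1 ∧ C *ᵥ z = 0 := by
  constructor
  · rintro ⟨x, ⟨hx, hC⟩, rfl⟩
    have hz := W.monomials_pos hx
    exact ⟨hz, by simp [monomials, hWa], (exists_monomials_eq_iff hrange hz).1 ⟨x, hx, rfl⟩, hC⟩
  · rintro ⟨hz, -, hQz, hC⟩
    obtain ⟨x, hx, rfl⟩ := (exists_monomials_eq_iff hrange hz).2 hQz
    exact ⟨x, ⟨hx, hC⟩, rfl⟩

theorem Matrix.exists_mulVec_cons_one_eq_iff {m ι : Type*} [Fintype ι] [DecidableEq ι]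
    {C : Matrix m ι ℝ} {D : Matrix ι (Fin 2) ℝ} {Q : Matrix ι (Fin 2) ℤ}
    (hCD : ∀ v, C *ᵥ v = 0 ↔ ∃ t, v = D *ᵥ t) {a : ι} (hDa0 : D a 0 = 0) (hDa1 : D a 1 = 1)
    (hQ1 : ∀ i, Q i 1 = if i = a then 1 else 0) (z : ι → ℝ) :
    (∃ y, ((∀ i, 0 < D i 0 * y + D i 1) ∧
        ∏ i ∈ Finset.univ.erase a, (D i 0 * y + D i 1) ^ Q i 0 = 1) ∧ D *ᵥ ![y, 1] = z) ↔
      (∀ j, 0 < z j) ∧ z a = 1 ∧ Q.monomials z = 1 ∧ C *ᵥ z = 0 := by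
  constructor
  · rintro ⟨y, ⟨hpos, hprod⟩, rfl⟩
    have hza : (D *ᵥ ![y, 1]) a = 1 := by simp [hDa0, hDa1]
    refine ⟨by simpa using hpos, hza, ?_, (hCD _).2 ⟨_, rfl⟩⟩
    simpa [monomials_eq_one_iff_prod_erase hQ1 hza] using hprod
  · rintro ⟨hz, hza, hQz, hC⟩
    obtain ⟨y, rfl⟩ := (mulVec_eq_zero_iff_exists_eq_mulVec_cons_one hCD hDa0 hDa1 hza).1 hC
    refine ⟨y, ⟨by simpa using hz, ?_⟩, rfl⟩
    simpa [monomials_eq_one_iff_prod_erase hQ1 hza] using hQz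

theorem stmt19_general (n : ℕ)
    (W : Matrix (Fin n) (Fin (n + 2)) ℤ)
    (Cm : Matrix (Fin n) (Fin (n + 2)) ℝ)
    (hWlast : ∀ i, W i (Fin.last (n + 1)) = 0)
    (hWrank : LinearIndependent ℝ (fun i : Fin n => fun j : Fin (n + 2) => (W i j : ℝ)))
    (Q : Matrix (Fin (n + 2)) (Fin 2) ℤ)
    (hQker : ∀ v : Fin (n + 2) → ℤ, W.mulVec v = 0 ↔ ∃ t : Fin 2 → ℤ, v = Q.mulVec t)
    (hQinj : ∀ t : Fin 2 → ℤ, Q.mulVec t = 0 → t = 0)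
    (hQlast : ∀ i : Fin (n + 2), Q i 1 = if i = Fin.last (n + 1) then 1 else 0)
    (D : Matrix (Fin (n + 2)) (Fin 2) ℝ)
    (hDker : ∀ v : Fin (n + 2) → ℝ, Cm.mulVec v = 0 ↔ ∃ t : Fin 2 → ℝ, v = D.mulVec t)
    (hDinj : ∀ t : Fin 2 → ℝ, D.mulVec t = 0 → t = 0)
    (hDlast0 : D (Fin.last (n + 1)) 0 = 0) (hDlast1 : D (Fin.last (n + 1)) 1 = 1) :
    ∃ e : {x : Fin n → ℝ // (∀ i, 0 < x i) ∧
            Cm.mulVec (fun j => ∏ i, x i ^ (W i j)) = 0} ≃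
          {y : ℝ // (∀ i : Fin (n + 2), 0 < D i 0 * y + D i 1) ∧
            ∏ i ∈ Finset.univ.filter (fun i : Fin (n + 2) => (i : ℕ) < n + 1),
              (D i 0 * y + D i 1) ^ (Q i 0) = 1},
      ∀ x, (fun j => ∏ i, x.1 i ^ (W i j)) = D.mulVec ![(e x).1, 1] := by
  have hWinj : Injective (W.map (Int.cast : ℤ → ℝ)).vecMul := vecMul_injective_iff.2 hWrank
  have hWQ : W * Q = 0 :=
    ext_iff_mulVec.2 fun t => by rw [← mulVec_mulVec, (hQker _).2 ⟨t, rfl⟩, zero_mulVec]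
  have hWQ' : W.map (Int.cast : ℤ → ℝ) * Q.map (Int.cast : ℤ → ℝ) = 0 :=
    calc _ = (W * Q).map (Int.castRingHom ℝ) := Matrix.map_mul.symm
      _ = 0 := by simp [hWQ]
  have hgale := range_vecMulLinear_eq_ker hWQ' hWinj (vecMul_map_intCast_surjective hQinj hQlast)
    (by simp)
  rw [Fin.univ_filter_val_lt_eq_erase_last]
  refine Equiv.exists_apply_eq_of_range_eq (f := fun x => W.monomials (Subtype.val x))
    (g := fun y => D *ᵥ ![Subtype.val y, 1]) ?_ ?_ ?_
  · exact fun x x' h => Subtype.ext (monomials_injOn hWinj x.2.1 x'.2.1 h)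
  · exact (mulVec_cons_one_injective hDinj).comp Subtype.val_injective
  · ext z
    simp only [Set.mem_range, Subtype.exists, exists_prop]
    exact (exists_monomials_eq_iff_of_mulVec_eq_zero Cm hgale hWlast z).trans
      (exists_mulVec_cons_one_eq_iff hDker hDlast0 hDlast1 hQlast z).symm

theorem stmt19 (n : ℕ)
    (W : Matrix (Fin n) (Fin (n + 2)) ℤ)
    (Cm : Matrix (Fin n) (Fin (n + 2)) ℝ)
    (hWlast : ∀ i, W i (Fin.last (n + 1)) = 0)
    (hWrank : LinearIndependent ℝ (fun i : Fin n => fun j : Fin (n + 2) => (W i j : ℝ)))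
    (hCrank : LinearIndependent ℝ (fun i : Fin n => fun j : Fin (n + 2) => Cm i j))
    (Q : Matrix (Fin (n + 2)) (Fin 2) ℤ)
    (hQker : ∀ v : Fin (n + 2) → ℤ, W.mulVec v = 0 ↔ ∃ t : Fin 2 → ℤ, v = Q.mulVec t)
    (hQinj : ∀ t : Fin 2 → ℤ, Q.mulVec t = 0 → t = 0)
    (hQlast : ∀ i : Fin (n + 2), Q i 1 = if i = Fin.last (n + 1) then 1 else 0)
    (D : Matrix (Fin (n + 2)) (Fin 2) ℝ)
    (hDker : ∀ v : Fin (n + 2) → ℝ, Cm.mulVec v = 0 ↔ ∃ t : Fin 2 → ℝ, v = D.mulVec t)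
    (hDinj : ∀ t : Fin 2 → ℝ, D.mulVec t = 0 → t = 0)
    (hDlast0 : D (Fin.last (n + 1)) 0 = 0) (hDlast1 : D (Fin.last (n + 1)) 1 = 1) :
    ∃ e : {x : Fin n → ℝ // (∀ i, 0 < x i) ∧
            Cm.mulVec (fun j => ∏ i, x i ^ (W i j)) = 0} ≃
          {y : ℝ // (∀ i : Fin (n + 2), 0 < D i 0 * y + D i 1) ∧
            ∏ i ∈ Finset.univ.filter (fun i : Fin (n + 2) => (i : ℕ) < n + 1),
              (D i 0 * y + D i 1) ^ (Q i 0) = 1},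
      ∀ x, (fun j => ∏ i, x.1 i ^ (W i j)) = D.mulVec ![(e x).1, 1] :=
  stmt19_general n W Cm hWlast hWrank Q hQker hQinj hQlast D hDker hDinj hDlast0 hDlast1
end
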